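/- arXiv:2406.17447 — 10 statements merged into one kernel-verified Lean document; each statement's English description precedes it below -/
import Mathlib

section
/- Vidal's concavity criterion for pure-state entanglement monotones. Let a and b be finite nonempty types (party A and the complementary parties B), let ψ : a × b → ℂ be a unit vector (∑ x, ‖ψ x‖² = 1), and let ρ = vecMulVec ψ (star ψ) ∈ Matrix (a × b) (a × b) ℂ be its rank-one density matrix. Let ι be a finite type and E : ι → Matrix a a ℂ a trace-preserving Kraus family, ∑ i, (E i)ᴴ * (E i) = 1. For each i set ρ_i = ((E i) ⊗ₖ (1 : Matrix b b ℂ)) * ρ * ((E i) ⊗ₖ 1)ᴴ and p_i = (ρ_i.trace).re. Let f : Matrix b b ℂ → ℝ be concave on the set {σ | σ.PosSemidef ∧ σ.trace = 1}. Then ∑ over those i with p_i ≠ 0 of p_i * f ((p_i)⁻¹ • ptrA(ρ_i)) ≤ f (ptrA(ρ)), where ptrA(M) ∈ Matrix b b ℂ is the partial trace over a, ptrA(M) j j' = ∑ i : a, M (i, j) (i, j'). -/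
open Matrix Kronecker ComplexOrder

/-- Partial trace over the first factor `a`:
`ptrA M j j' = ∑ i : a, M (i, j) (i, j')`. -/
noncomputable def ptrA {a b : Type*} [Fintype a] (M : Matrix (a × b) (a × b) ℂ) :
    Matrix b b ℂ :=
  Matrix.of fun j j' => ∑ i : a, M (i, j) (i, j')

/-!
The reduced states `Tr_A ρᵢ` of the post-measurement states are positive semidefinite, and since
the partial trace over `A` is cyclic in operators acting on `A`, the trace-preserving Kraus family
makes them sum to `Tr_A ρ`. Normalised by their traces `pᵢ` they form an ensemble of density
matrices with weights `pᵢ` and barycentre `Tr_A ρ`, so the inequality is Jensen's inequality for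
the concave function `f`.
-/

open Finset

section DensityMatrix

variable {𝕜 n ι : Type*} [RCLike 𝕜] [Fintype n] [Fintype ι]

lemma Matrix.PosSemidef.ofReal_re_trace {A : Matrix n n 𝕜} (hA : A.PosSemidef) :
    (RCLike.re A.trace : 𝕜) = A.trace :=
  RCLike.ext (by simp) (by simp [(RCLike.nonneg_iff.mp hA.trace_nonneg).2])

lemma Matrix.PosSemidef.re_trace_nonneg {A : Matrix n n 𝕜} (hA : A.PosSemidef) :
    0 ≤ RCLike.re A.trace :=
  (RCLike.nonneg_iff.mp hA.trace_nonneg).1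

lemma Matrix.trace_vecMulVec_star (ψ : n → 𝕜) :
    (vecMulVec ψ (star ψ)).trace = ((∑ x, ‖ψ x‖ ^ 2 : ℝ) : 𝕜) := by
  simp [dotProduct, RCLike.mul_conj]

lemma ConcaveOn.sum_re_trace_mul_le {f : Matrix n n 𝕜 → ℝ}
    (hf : ConcaveOn ℝ {σ : Matrix n n 𝕜 | σ.PosSemidef ∧ σ.trace = 1} f)
    {σ : ι → Matrix n n 𝕜} (hσ : ∀ i, (σ i).PosSemidef) (htr : (∑ i, σ i).trace = 1) :
    ∑ i ∈ univ.filter (fun i => RCLike.re (σ i).trace ≠ 0),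
      RCLike.re (σ i).trace * f ((RCLike.re (σ i).trace)⁻¹ • σ i) ≤ f (∑ i, σ i) := by
  set p := fun i => RCLike.re (σ i).trace
  set t := univ.filter (fun i => p i ≠ 0)
  have hp : ∀ i, (p i : 𝕜) = (σ i).trace := fun i => (hσ i).ofReal_re_trace
  have hσ_sum : ∑ i ∈ t, σ i = ∑ i, σ i :=
    sum_subset (subset_univ t) fun i _ hi =>
      (hσ i).trace_eq_zero_iff.mp (by simpa [t, ← hp] using hi)
  have hp_sum : ∑ i ∈ t, p i = 1 := by
    apply RCLike.ofReal_injective (K := 𝕜)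
    simp only [RCLike.ofReal_sum, hp, RCLike.ofReal_one, ← trace_sum, hσ_sum, htr]
  have hmem : ∀ i ∈ t, (p i)⁻¹ • σ i ∈ {σ : Matrix n n 𝕜 | σ.PosSemidef ∧ σ.trace = 1} :=
    fun i hi => ⟨(hσ i).smul (inv_nonneg.mpr (hσ i).re_trace_nonneg), by
      rw [trace_smul, ← hp, RCLike.real_smul_eq_coe_mul, ← RCLike.ofReal_mul,
        inv_mul_cancel₀ (mem_filter.mp hi).2, RCLike.ofReal_one]⟩
  have hbarycentre : ∑ i ∈ t, p i • (p i)⁻¹ • σ i = ∑ i, σ i := by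
    rw [← hσ_sum]
    exact sum_congr rfl fun i hi => smul_inv_smul₀ (mem_filter.mp hi).2 _
  have hjensen := hf.le_map_sum (fun i _ => (hσ i).re_trace_nonneg) hp_sum hmem
  rw [hbarycentre] at hjensen
  exact hjensen

end DensityMatrix

section PartialTrace

variable {a b : Type*} [Fintype a]

lemma ptrA_eq_sum_submatrix (M : Matrix (a × b) (a × b) ℂ) :
    ptrA M = ∑ i, M.submatrix (Prod.mk i) (Prod.mk i) := by
  ext j j'
  simp [ptrA, Matrix.sum_apply]

lemma Matrix.PosSemidef.ptrA {M : Matrix (a × b) (a × b) ℂ} (hM : M.PosSemidef) :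
    (ptrA M).PosSemidef := by
  rw [ptrA_eq_sum_submatrix]
  exact posSemidef_sum _ fun i _ => hM.submatrix _

lemma trace_ptrA [Fintype b] (M : Matrix (a × b) (a × b) ℂ) : (ptrA M).trace = M.trace := by
  simp only [trace, Matrix.diag, ptrA, ← univ_product_univ, sum_product]
  exact sum_comm

lemma ptrA_sum {ι : Type*} (s : Finset ι) (M : ι → Matrix (a × b) (a × b) ℂ) :
    ptrA (∑ i ∈ s, M i) = ∑ i ∈ s, ptrA (M i) := by
  ext j j'
  simp only [ptrA, of_apply, Matrix.sum_apply]
  exact sum_comm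

variable [Fintype b] [DecidableEq b]

lemma ptrA_kronecker_one_mul_comm (X : Matrix a a ℂ) (N : Matrix (a × b) (a × b) ℂ) :
    ptrA ((X ⊗ₖ (1 : Matrix b b ℂ)) * N) = ptrA (N * (X ⊗ₖ (1 : Matrix b b ℂ))) := by
  ext j j'
  simp only [ptrA, of_apply, mul_apply, kroneckerMap_apply, one_apply,
    ← univ_product_univ, sum_product, mul_ite, mul_one, mul_zero, ite_mul, zero_mul,
    sum_ite_eq, sum_ite_eq', mem_univ, if_true]
  rw [sum_comm]
  exact sum_congr rfl fun _ _ => sum_congr rfl fun _ _ => mul_comm _ _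

lemma sum_ptrA_kraus [DecidableEq a] {ι : Type*} [Fintype ι] (E : ι → Matrix a a ℂ)
    (hE : ∑ i, (E i)ᴴ * E i = 1) (ρ : Matrix (a × b) (a × b) ℂ) :
    ∑ i, ptrA ((E i ⊗ₖ (1 : Matrix b b ℂ)) * ρ * (E i ⊗ₖ (1 : Matrix b b ℂ))ᴴ) = ptrA ρ := by
  calc ∑ i, ptrA ((E i ⊗ₖ (1 : Matrix b b ℂ)) * ρ * (E i ⊗ₖ (1 : Matrix b b ℂ))ᴴ)
      = ∑ i, ptrA (ρ * (((E i)ᴴ * E i) ⊗ₖ (1 : Matrix b b ℂ))) := by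
        refine sum_congr rfl fun i _ => ?_
        rw [mul_assoc, ptrA_kronecker_one_mul_comm, mul_assoc, conjTranspose_kronecker,
          conjTranspose_one, ← mul_kronecker_mul, one_mul]
    _ = ptrA (ρ * ((∑ i, (E i)ᴴ * E i) ⊗ₖ (1 : Matrix b b ℂ))) := by
        rw [← ptrA_sum, ← mul_sum]
        congr 2
        exact (map_sum ((kroneckerBilinear (R := ℂ) (α := ℂ)).flip (1 : Matrix b b ℂ)) _ _).symm
    _ = ptrA ρ := by rw [hE, one_kronecker_one, mul_one]

end PartialTrace

theorem vidal_concavity_criterion_general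
    {a b ι : Type*} [Fintype a] [Fintype b] [Fintype ι]
    [DecidableEq a] [DecidableEq b]
    (ψ : a × b → ℂ) (hψ : ∑ x, ‖ψ x‖ ^ 2 = 1)
    (E : ι → Matrix a a ℂ) (hE : ∑ i, (E i)ᴴ * E i = 1)
    (ρ : Matrix (a × b) (a × b) ℂ) (hρ : ρ = Matrix.vecMulVec ψ (star ψ))
    (ρi : ι → Matrix (a × b) (a × b) ℂ)
    (hρi : ∀ i, ρi i =
      (E i ⊗ₖ (1 : Matrix b b ℂ)) * ρ * (E i ⊗ₖ (1 : Matrix b b ℂ))ᴴ)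
    (p : ι → ℝ) (hp : ∀ i, p i = ((ρi i).trace).re)
    (f : Matrix b b ℂ → ℝ)
    (hf : ConcaveOn ℝ {σ : Matrix b b ℂ | σ.PosSemidef ∧ σ.trace = 1} f) :
    ∑ i ∈ Finset.univ.filter (fun i => p i ≠ 0),
        p i * f ((p i)⁻¹ • ptrA (ρi i)) ≤ f (ptrA ρ) := by
  have hρ_psd : ρ.PosSemidef := hρ ▸ posSemidef_vecMulVec_self_star ψ
  have hσ : ∀ i, (ptrA (ρi i)).PosSemidef := fun i =>
    (hρi i ▸ hρ_psd.mul_mul_conjTranspose_same _).ptrA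
  have hsum : ∑ i, ptrA (ρi i) = ptrA ρ := by
    simpa only [← hρi] using sum_ptrA_kraus E hE ρ
  have htr : (∑ i, ptrA (ρi i)).trace = 1 := by
    rw [hsum, trace_ptrA, hρ, trace_vecMulVec_star, hψ, RCLike.ofReal_one]
  obtain rfl : p = fun i => RCLike.re (ptrA (ρi i)).trace := funext fun i => by
    rw [hp, trace_ptrA]; rfl
  rw [← hsum]
  exact hf.sum_re_trace_mul_le hσ htr

/-- **Vidal's concavity criterion.** For a unit vector `ψ` with rank-one density
matrix `ρ = |ψ⟩⟨ψ|`, a trace-preserving Kraus family `E` acting on party `a`, the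
post-measurement data `ρᵢ = (Eᵢ ⊗ 1) ρ (Eᵢ ⊗ 1)ᴴ`, `pᵢ = Re tr ρᵢ`, and a
function `f` concave on density matrices on `b`, one has
`∑_{i : pᵢ ≠ 0} pᵢ * f (pᵢ⁻¹ • Tr_A ρᵢ) ≤ f (Tr_A ρ)`. -/
theorem vidal_concavity_criterion
    {a b ι : Type*} [Fintype a] [Fintype b] [Fintype ι]
    [Nonempty a] [Nonempty b] [DecidableEq a] [DecidableEq b]
    (ψ : a × b → ℂ) (hψ : ∑ x, ‖ψ x‖ ^ 2 = 1)
    (E : ι → Matrix a a ℂ) (hE : ∑ i, (E i)ᴴ * E i = 1)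
    (ρ : Matrix (a × b) (a × b) ℂ) (hρ : ρ = Matrix.vecMulVec ψ (star ψ))
    (ρi : ι → Matrix (a × b) (a × b) ℂ)
    (hρi : ∀ i, ρi i =
      (E i ⊗ₖ (1 : Matrix b b ℂ)) * ρ * (E i ⊗ₖ (1 : Matrix b b ℂ))ᴴ)
    (p : ι → ℝ) (hp : ∀ i, p i = ((ρi i).trace).re)
    (f : Matrix b b ℂ → ℝ)
    (hf : ConcaveOn ℝ {σ : Matrix b b ℂ | σ.PosSemidef ∧ σ.trace = 1} f) :
    ∑ i ∈ Finset.univ.filter (fun i => p i ≠ 0),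
        p i * f ((p i)⁻¹ • ptrA (ρi i)) ≤ f (ptrA ρ) :=
  vidal_concavity_criterion_general ψ hψ E hE ρ hρ ρi hρi p hp f hf
end

section
/- Convexity of the sum of the k largest eigenvalues (Vidal's bipartite monotones ν̃_k^V are concave). Let n be a finite nonempty type and k : ℕ. For a Hermitian matrix A ∈ Matrix n n ℂ with hA : A.IsHermitian, define E_k(A) as the maximum over all Finsets s ⊆ n with s.card = k of ∑ i ∈ s, hA.eigenvalues i (this equals the sum of the k largest eigenvalues of A). Then for all Hermitian A, B ∈ Matrix n n ℂ and all t ∈ [0,1], the matrix t • A + (1 − t) • B is Hermitian and E_k(t • A + (1 − t) • B) ≤ t * E_k(A) + (1 − t) * E_k(B). -/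
/-!
Ky Fan's maximum principle: the sum of the `k` largest eigenvalues of a Hermitian matrix `A` is
the maximum of `Re tr (P A)` over orthogonal projections `P` of trace `k`, and a maximum of
functions linear in `A` is convex. The maximum is attained at spectral projections. For the upper
bound, conjugate `P` into an eigenbasis of `A`: then `Re tr (P A) = ∑ⱼ wⱼ λⱼ`, where the diagonal
weights `wⱼ` of the conjugated projection lie in `[0, 1]` and sum to `k`, and such a weighted sum
never exceeds the sum of the `k` largest `λⱼ`.
-/

open Matrix

/-- The maximum, over all `Finset`s `s` of cardinality `k`, of the sum of the
eigenvalues of a Hermitian matrix indexed by `s`; this equals the sum of the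
`k` largest eigenvalues. -/
noncomputable def sumKLargestEigenvalues {n : Type*} [Fintype n] [DecidableEq n]
    (k : ℕ) (A : Matrix n n ℂ) (hA : A.IsHermitian) : ℝ :=
  sSup {x : ℝ | ∃ s : Finset n, s.card = k ∧ x = ∑ i ∈ s, hA.eigenvalues i}

section Threshold

open Finset

variable {ι : Type*} [Fintype ι]

theorem exists_card_eq_threshold (f : ι → ℝ) {k : ℕ} (hk : k ≤ Fintype.card ι) :
    ∃ (s : Finset ι) (m : ℝ), s.card = k ∧ (∀ i ∈ s, m ≤ f i) ∧ ∀ j ∉ s, f j ≤ m := by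
  classical
  induction k with
  | zero =>
    obtain ⟨M, hM⟩ := (Set.finite_range f).bddAbove
    exact ⟨∅, M, rfl, by simp, fun j _ => hM ⟨j, rfl⟩⟩
  | succ k ih =>
    obtain ⟨s, m, hs, hms, hmsc⟩ := ih (by omega)
    have hne : sᶜ.Nonempty := by
      rw [← card_pos, card_compl]; omega
    obtain ⟨j, hj, hjmax⟩ := sᶜ.exists_max_image f hne
    have hjs : j ∉ s := mem_compl.mp hj
    refine ⟨insert j s, f j, by rw [card_insert_of_notMem hjs, hs], ?_, ?_⟩
    · simp only [mem_insert, forall_eq_or_imp, le_refl, true_and]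
      exact fun i hi => (hmsc j hjs).trans (hms i hi)
    · intro l hl
      exact hjmax l (mem_compl.mpr fun h => hl (mem_insert_of_mem h))

theorem sum_mul_le_sum_of_threshold {f w : ι → ℝ} {s : Finset ι} {m : ℝ} (hw0 : 0 ≤ w)
    (hw1 : w ≤ 1) (hw : ∑ j, w j = s.card) (hs : ∀ i ∈ s, m ≤ f i) (hsc : ∀ j ∉ s, f j ≤ m) :
    ∑ j, w j * f j ≤ ∑ i ∈ s, f i := by
  classical
  -- both sides move by `m * #s` when `f` is shifted by `m`, as `∑ w = #s`
  have hshift : ∑ j, w j * f j - ∑ i ∈ s, f i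
      = ∑ j, (w j - if j ∈ s then 1 else 0) * (f j - m) := by
    simp only [mul_sub, sub_mul, sum_sub_distrib, ite_mul, one_mul, zero_mul, sum_ite_mem,
      univ_inter, ← sum_mul, hw, sum_const, nsmul_eq_mul]
    ring
  have hterm : ∀ j, (w j - if j ∈ s then 1 else 0) * (f j - m) ≤ 0 := by
    intro j
    by_cases hj : j ∈ s
    · simp only [hj, if_true]
      exact mul_nonpos_of_nonpos_of_nonneg (sub_nonpos.mpr (hw1 j)) (sub_nonneg.mpr (hs j hj))
    · simp only [hj, if_false, sub_zero]
      exact mul_nonpos_of_nonneg_of_nonpos (hw0 j) (sub_nonpos.mpr (hsc j hj))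
  linarith [sum_nonpos fun j (_ : j ∈ univ) => hterm j]

theorem exists_card_eq_sum_mul_le (f : ι → ℝ) {w : ι → ℝ} {k : ℕ}
    (hw0 : 0 ≤ w) (hw1 : w ≤ 1) (hw : ∑ j, w j = k) :
    ∃ s : Finset ι, s.card = k ∧ ∑ j, w j * f j ≤ ∑ i ∈ s, f i := by
  have hk : (k : ℝ) ≤ Fintype.card ι := by
    simpa [← hw] using sum_le_sum fun j (_ : j ∈ univ) => hw1 j
  obtain ⟨s, m, hs, hms, hmsc⟩ := exists_card_eq_threshold f (k := k) (by exact_mod_cast hk)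
  exact ⟨s, hs, sum_mul_le_sum_of_threshold hw0 hw1 (by rw [hw, hs]) hms hmsc⟩

end Threshold

section StarProjection

variable {𝕜 : Type*} [RCLike 𝕜] {n : Type*} [Fintype n]

open scoped ComplexOrder MatrixOrder in
theorem IsStarProjection.re_diag_nonneg {P : Matrix n n 𝕜} (hP : IsStarProjection P) (j : n) :
    0 ≤ RCLike.re (P j j) :=
  (RCLike.nonneg_iff.mp hP.nonneg.posSemidef.diag_nonneg).1

theorem IsStarProjection.re_diag_le_one [DecidableEq n] {P : Matrix n n 𝕜}
    (hP : IsStarProjection P) (j : n) : RCLike.re (P j j) ≤ 1 := by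
  simpa [one_apply_eq] using hP.one_sub.re_diag_nonneg j

theorem Matrix.isStarProjection_diagonal_indicator [DecidableEq n] (s : Finset n) :
    IsStarProjection (diagonal fun j => if j ∈ s then (1 : 𝕜) else 0) := by
  refine ⟨?_, ?_⟩
  · rw [IsIdempotentElem, diagonal_mul_diagonal]
    congr 1; ext j; by_cases hj : j ∈ s <;> simp [hj]
  · rw [IsSelfAdjoint, star_eq_conjTranspose, diagonal_conjTranspose]
    congr 1; ext j; by_cases hj : j ∈ s <;> simp [hj]

end StarProjection

namespace Matrix

open Unitary

variable {𝕜 : Type*} [RCLike 𝕜] {n : Type*} [Fintype n] [DecidableEq n]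

theorem trace_conjStarAlgAut (u : unitary (Matrix n n 𝕜)) (M : Matrix n n 𝕜) :
    (conjStarAlgAut 𝕜 _ u M).trace = M.trace := by
  rw [conjStarAlgAut_apply, trace_mul_cycle, coe_star_mul_self, one_mul]

namespace IsHermitian

variable {A : Matrix n n 𝕜}

theorem trace_mul_eq_sum (hA : A.IsHermitian) (M : Matrix n n 𝕜) :
    (M * A).trace =
      ∑ j, conjStarAlgAut 𝕜 _ (star hA.eigenvectorUnitary) M j j * hA.eigenvalues j := by
  rw [← trace_conjStarAlgAut (star hA.eigenvectorUnitary), map_mul,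
    hA.conjStarAlgAut_star_eigenvectorUnitary]
  simp [trace, mul_diagonal]

theorem exists_card_eq_re_trace_mul_le (hA : A.IsHermitian) {P : Matrix n n 𝕜}
    (hP : IsStarProjection P) {k : ℕ} (hk : P.trace = k) :
    ∃ s : Finset n, s.card = k ∧ RCLike.re (P * A).trace ≤ ∑ i ∈ s, hA.eigenvalues i := by
  set Q := conjStarAlgAut 𝕜 _ (star hA.eigenvectorUnitary) P
  have hQ : IsStarProjection Q := hP.map _
  have hw : ∑ j, RCLike.re (Q j j) = k := by
    have hQk : Q.trace = k := (trace_conjStarAlgAut _ P).trans hk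
    simpa [trace] using congrArg RCLike.re hQk
  obtain ⟨s, hs, hle⟩ := exists_card_eq_sum_mul_le hA.eigenvalues
    (fun j => hQ.re_diag_nonneg j) (fun j => hQ.re_diag_le_one j) hw
  refine ⟨s, hs, ?_⟩
  rw [hA.trace_mul_eq_sum, map_sum RCLike.re]
  simpa only [RCLike.re_mul_ofReal] using hle

theorem exists_isStarProjection_re_trace_mul_eq (hA : A.IsHermitian) (s : Finset n) :
    ∃ P : Matrix n n 𝕜, IsStarProjection P ∧ P.trace = s.card ∧
      RCLike.re (P * A).trace = ∑ i ∈ s, hA.eigenvalues i := by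
  set D : Matrix n n 𝕜 := diagonal fun j => if j ∈ s then 1 else 0
  refine ⟨conjStarAlgAut 𝕜 _ hA.eigenvectorUnitary D,
    (isStarProjection_diagonal_indicator s).map _, ?_, ?_⟩
  · rw [trace_conjStarAlgAut]
    simp [D, trace_diagonal]
  · rw [hA.trace_mul_eq_sum, ← conjStarAlgAut_symm, StarAlgEquiv.symm_apply_apply,
      map_sum RCLike.re]
    simp [D, apply_ite (RCLike.re (K := 𝕜)), Finset.sum_ite_mem]

end IsHermitian

end Matrix

section SumKLargestEigenvalues

variable {n : Type*} [Fintype n] [DecidableEq n] {k : ℕ} {A : Matrix n n ℂ}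

theorem le_sumKLargestEigenvalues (hA : A.IsHermitian) {s : Finset n} (hs : s.card = k) :
    ∑ i ∈ s, hA.eigenvalues i ≤ sumKLargestEigenvalues k A hA := by
  refine le_csSup (Set.Finite.bddAbove ?_) ⟨s, hs, rfl⟩
  refine (Set.finite_range fun s : Finset n => ∑ i ∈ s, hA.eigenvalues i).subset ?_
  rintro x ⟨s, -, rfl⟩
  exact ⟨s, rfl⟩

theorem sumKLargestEigenvalues_le (hA : A.IsHermitian) (hk : k ≤ Fintype.card n) {c : ℝ}
    (h : ∀ s : Finset n, s.card = k → ∑ i ∈ s, hA.eigenvalues i ≤ c) :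
    sumKLargestEigenvalues k A hA ≤ c := by
  obtain ⟨s, -, hs⟩ := Finset.exists_subset_card_eq (s := Finset.univ) (by simpa using hk)
  refine csSup_le ⟨_, s, hs, rfl⟩ ?_
  rintro x ⟨s, hs, rfl⟩
  exact h s hs

theorem sumKLargestEigenvalues_of_card_lt (hA : A.IsHermitian) (hk : Fintype.card n < k) :
    sumKLargestEigenvalues k A hA = 0 := by
  rw [← Real.sSup_empty, sumKLargestEigenvalues]
  congr 1
  refine Set.eq_empty_of_forall_notMem ?_
  rintro x ⟨s, hs, -⟩
  exact (s.card_le_univ.trans_lt hk).ne hs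

theorem Matrix.IsHermitian.re_trace_mul_le_sumKLargestEigenvalues (hA : A.IsHermitian)
    {P : Matrix n n ℂ} (hP : IsStarProjection P) (hk : P.trace = k) :
    RCLike.re (P * A).trace ≤ sumKLargestEigenvalues k A hA := by
  obtain ⟨s, hs, hle⟩ := hA.exists_card_eq_re_trace_mul_le hP hk
  exact hle.trans (le_sumKLargestEigenvalues hA hs)

end SumKLargestEigenvalues

theorem sumKLargestEigenvalues_convex_general {n : Type*} [Fintype n] [DecidableEq n] (k : ℕ)
    (A B : Matrix n n ℂ) (hA : A.IsHermitian) (hB : B.IsHermitian)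
    (t : ℝ) (ht0 : 0 ≤ t) (ht1 : t ≤ 1) :
    ∃ hC : (t • A + (1 - t) • B).IsHermitian,
      sumKLargestEigenvalues k (t • A + (1 - t) • B) hC ≤
        t * sumKLargestEigenvalues k A hA
          + (1 - t) * sumKLargestEigenvalues k B hB := by
  have hC : (t • A + (1 - t) • B).IsHermitian :=
    (hA.smul (IsSelfAdjoint.all t)).add (hB.smul (IsSelfAdjoint.all (1 - t)))
  refine ⟨hC, ?_⟩
  rcases le_or_gt k (Fintype.card n) with hk | hk
  · refine sumKLargestEigenvalues_le hC hk fun s hs => ?_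
    obtain ⟨P, hP, hPtr, hPC⟩ := hC.exists_isStarProjection_re_trace_mul_eq s
    rw [hs] at hPtr
    have hsplit : RCLike.re (P * (t • A + (1 - t) • B)).trace
        = t * RCLike.re (P * A).trace + (1 - t) * RCLike.re (P * B).trace := by
      simp [mul_add, trace_add, trace_smul]
    rw [← hPC, hsplit]
    gcongr
    · exact hA.re_trace_mul_le_sumKLargestEigenvalues hP hPtr
    · exact hB.re_trace_mul_le_sumKLargestEigenvalues hP hPtr
  · simp [sumKLargestEigenvalues_of_card_lt _ hk]

/-- **Convexity of the sum of the `k` largest eigenvalues** (concavity of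
Vidal's bipartite monotones `ν̃ₖ`): for Hermitian `A`, `B` and `t ∈ [0,1]`, the
matrix `t • A + (1 - t) • B` is Hermitian and
`E_k (t • A + (1 - t) • B) ≤ t * E_k A + (1 - t) * E_k B`. -/
theorem sumKLargestEigenvalues_convex {n : Type*} [Fintype n] [DecidableEq n]
    [Nonempty n] (k : ℕ)
    (A B : Matrix n n ℂ) (hA : A.IsHermitian) (hB : B.IsHermitian)
    (t : ℝ) (ht0 : 0 ≤ t) (ht1 : t ≤ 1) :
    ∃ hC : (t • A + (1 - t) • B).IsHermitian,
      sumKLargestEigenvalues k (t • A + (1 - t) • B) hC ≤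
        t * sumKLargestEigenvalues k A hA
          + (1 - t) * sumKLargestEigenvalues k B hB :=
  sumKLargestEigenvalues_convex_general k A B hA hB t ht0 ht1
end

section
/- Convexity of integer trace powers on positive semidefinite matrices. Let d be a finite nonempty type and n : ℕ with 1 ≤ n. For all positive semidefinite A, B ∈ Matrix d d ℂ and all t ∈ [0,1], (((t • A + (1 − t) • B) ^ n).trace).re ≤ t * ((A ^ n).trace).re + (1 − t) * ((B ^ n).trace).re. -/
/-!
Diagonalize `M = t • A + (1 - t) • B` in an orthonormal eigenbasis `(vᵢ)`. Then
`Re tr Mⁿ = ∑ᵢ Re ⟪vᵢ, M vᵢ⟫ ^ n`, and `Re ⟪vᵢ, M vᵢ⟫` is the convex combination of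
`Re ⟪vᵢ, A vᵢ⟫ ≥ 0` and `Re ⟪vᵢ, B vᵢ⟫ ≥ 0`, so convexity of `x ↦ xⁿ` on `[0, ∞)` reduces the
claim to `Re ⟪v, A v⟫ ^ n ≤ Re ⟪v, Aⁿ v⟫` for unit vectors `v`. That is Jensen's inequality for
the eigenvalues of `A` weighted by `‖⟪wⱼ, v⟫‖ ^ 2`, where `(wⱼ)` is an eigenbasis of `A`.
-/

open Matrix ComplexOrder RCLike

namespace LinearMap

variable {𝕜 E : Type*} [RCLike 𝕜] [NormedAddCommGroup E] [InnerProductSpace 𝕜 E]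

local notation "⟪" x ", " y "⟫" => inner 𝕜 x y

theorem convex_setOf_isPositive [Module ℝ E] [IsScalarTower ℝ 𝕜 E] :
    Convex ℝ {T : E →ₗ[𝕜] E | T.IsPositive} := by
  intro S hS T hT a b ha hb _
  simp only [Set.mem_ofPred_eq, real_smul_eq_coe_smul (K := 𝕜) a, real_smul_eq_coe_smul (K := 𝕜) b]
  exact (hS.smul_of_nonneg (ofReal_nonneg.2 ha)).add (hT.smul_of_nonneg (ofReal_nonneg.2 hb))

theorem re_inner_pow_apply_of_hasEigenvector {T : E →ₗ[𝕜] E} {μ : ℝ} {v : E}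
    (hv : Module.End.HasEigenvector T (μ : 𝕜) v) (hv1 : ‖v‖ = 1) (k : ℕ) :
    re ⟪v, (T ^ k) v⟫ = re ⟪v, T v⟫ ^ k := by
  have re_inner_smul : ∀ c : 𝕜, re ⟪v, c • v⟫ = re c := fun c => by
    simp [inner_smul_right, inner_self_eq_norm_sq_to_K, hv1]
  rw [hv.pow_apply, hv.apply_eq_smul, ← ofReal_pow, re_inner_smul, re_inner_smul, ofReal_re,
    ofReal_re]

variable [FiniteDimensional 𝕜 E] {n : ℕ} (hn : Module.finrank 𝕜 E = n)

theorem IsSymmetric.re_inner_pow_apply_eq_sum {T : E →ₗ[𝕜] E} (hT : T.IsSymmetric) (k : ℕ)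
    (x : E) :
    re ⟪x, (T ^ k) x⟫ = ∑ i, hT.eigenvalues hn i ^ k * ‖⟪hT.eigenvectorBasis hn i, x⟫‖ ^ 2 := by
  set b := hT.eigenvectorBasis hn
  have hb : ∀ i, ⟪b i, (T ^ k) x⟫ = (hT.eigenvalues hn i : 𝕜) ^ k * ⟪b i, x⟫ := fun i => by
    rw [← (hT.pow k) (b i), ((hT.hasEigenvector_eigenvectorBasis hn i).pow_apply k),
      inner_smul_left, map_pow, conj_ofReal]
  rw [← b.sum_inner_mul_inner, map_sum]
  refine Finset.sum_congr rfl fun i _ => ?_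
  rw [hb, mul_left_comm, ← ofReal_pow, re_ofReal_mul, ← inner_conj_symm x,
    RCLike.conj_mul, ← ofReal_pow, ofReal_re]

theorem IsPositive.re_inner_apply_pow_le {T : E →ₗ[𝕜] E} (hT : T.IsPositive) {x : E}
    (hx : ‖x‖ = 1) (k : ℕ) : re ⟪x, T x⟫ ^ k ≤ re ⟪x, (T ^ k) x⟫ := by
  have hexp := hT.isSymmetric.re_inner_pow_apply_eq_sum rfl (x := x)
  set μ := hT.isSymmetric.eigenvalues rfl
  set w := fun i => ‖⟪hT.isSymmetric.eigenvectorBasis rfl i, x⟫‖ ^ 2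
  have hw : ∑ i, w i = 1 := by
    simp only [w, OrthonormalBasis.sum_sq_norm_inner_right, hx, one_pow]
  calc re ⟪x, T x⟫ ^ k = (∑ i, w i • μ i) ^ k := by
        simpa only [pow_one, smul_eq_mul, mul_comm (w _)] using congrArg (· ^ k) (hexp 1)
    _ ≤ ∑ i, w i • μ i ^ k :=
        (convexOn_pow k).map_sum_le (fun i _ => by positivity) hw
          (fun i _ => hT.nonneg_eigenvalues rfl i)
    _ = re ⟪x, (T ^ k) x⟫ := by
        rw [hexp k]
        exact Finset.sum_congr rfl fun i _ => mul_comm _ _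

theorem convexOn_re_trace_pow [Module ℝ E] [IsScalarTower ℝ 𝕜 E] (k : ℕ) :
    ConvexOn ℝ {T : E →ₗ[𝕜] E | T.IsPositive} (fun T => re (trace 𝕜 E (T ^ k))) := by
  refine ⟨convex_setOf_isPositive, fun S hS T hT a b ha hb hab => ?_⟩
  have hM := (convex_setOf_isPositive (𝕜 := 𝕜) hS hT ha hb hab).isSymmetric
  set v := hM.eigenvectorBasis rfl
  simp only [trace_eq_sum_inner _ v, map_sum, smul_eq_mul, Finset.mul_sum,
    ← Finset.sum_add_distrib]
  refine Finset.sum_le_sum fun i _ => ?_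
  have hsplit : re ⟪v i, (a • S + b • T) (v i)⟫ =
      a * re ⟪v i, S (v i)⟫ + b * re ⟪v i, T (v i)⟫ := by
    rw [add_apply, smul_apply, smul_apply, real_smul_eq_coe_smul (K := 𝕜) a,
      real_smul_eq_coe_smul (K := 𝕜) b, inner_add_right, inner_smul_right,
      inner_smul_right, map_add, re_ofReal_mul, re_ofReal_mul]
  calc re ⟪v i, ((a • S + b • T) ^ k) (v i)⟫
      = (a * re ⟪v i, S (v i)⟫ + b * re ⟪v i, T (v i)⟫) ^ k := by
        rw [re_inner_pow_apply_of_hasEigenvector (hM.hasEigenvector_eigenvectorBasis rfl i)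
          (v.norm_eq_one i), hsplit]
    _ ≤ a * re ⟪v i, S (v i)⟫ ^ k + b * re ⟪v i, T (v i)⟫ ^ k :=
        (convexOn_pow k).2 (hS.re_inner_nonneg_right _) (hT.re_inner_nonneg_right _) ha hb hab
    _ ≤ a * re ⟪v i, (S ^ k) (v i)⟫ + b * re ⟪v i, (T ^ k) (v i)⟫ := by
        gcongr
        · exact hS.re_inner_apply_pow_le (v.norm_eq_one i) k
        · exact hT.re_inner_apply_pow_le (v.norm_eq_one i) k

end LinearMap

theorem Matrix.convexOn_re_trace_pow {𝕜 d : Type*} [RCLike 𝕜] [Fintype d] [DecidableEq d]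
    (k : ℕ) :
    ConvexOn ℝ {A : Matrix d d 𝕜 | A.PosSemidef} (fun A => re (A ^ k).trace) := by
  have hset : {A : Matrix d d 𝕜 | A.PosSemidef} =
      (toEuclideanLin.restrictScalars ℝ) ⁻¹' {T | T.IsPositive} := by
    ext A; exact isPositive_toEuclideanLin_iff.symm
  have hfun : (fun A : Matrix d d 𝕜 => re (A ^ k).trace) =
      (fun T => re (LinearMap.trace 𝕜 _ (T ^ k))) ∘ (toEuclideanLin.restrictScalars ℝ) := by
    funext A
    rw [Function.comp_apply, LinearEquiv.restrictScalars_apply, ← toLpLin_pow, toLpLin_eq_toLin,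
      trace_toLin_eq]
  rw [hset, hfun]
  have h := LinearMap.convexOn_re_trace_pow (𝕜 := 𝕜) (E := EuclideanSpace 𝕜 d) k
  exact h.comp_linearMap (toEuclideanLin.restrictScalars ℝ).toLinearMap

theorem trace_pow_convex_general {d : Type*} [Fintype d] [DecidableEq d]
    (n : ℕ)
    (A B : Matrix d d ℂ) (hA : A.PosSemidef) (hB : B.PosSemidef)
    (t : ℝ) (ht0 : 0 ≤ t) (ht1 : t ≤ 1) :
    (((t • A + (1 - t) • B) ^ n).trace).re ≤
      t * ((A ^ n).trace).re + (1 - t) * ((B ^ n).trace).re := by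
  simpa using (Matrix.convexOn_re_trace_pow n).2 hA hB ht0 (sub_nonneg.2 ht1) (add_sub_cancel t 1)

/-- **Convexity of integer trace powers on positive semidefinite matrices:**
for PSD `A`, `B`, `n ≥ 1` and `t ∈ [0,1]`,
`Re tr ((t•A + (1-t)•B)^n) ≤ t * Re tr (A^n) + (1-t) * Re tr (B^n)`. -/
theorem trace_pow_convex {d : Type*} [Fintype d] [DecidableEq d] [Nonempty d]
    (n : ℕ) (hn : 1 ≤ n)
    (A B : Matrix d d ℂ) (hA : A.PosSemidef) (hB : B.PosSemidef)
    (t : ℝ) (ht0 : 0 ≤ t) (ht1 : t ≤ 1) :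
    (((t • A + (1 - t) • B) ^ n).trace).re ≤
      t * ((A ^ n).trace).re + (1 - t) * ((B ^ n).trace).re :=
  trace_pow_convex_general n A B hA hB t ht0 ht1
end

section
/- Convexity of the n-th root of the trace of the n-th power on positive semidefinite matrices (Lemma: 1 − (C_n)^{1/n} is a PSEM). Let d be a finite nonempty type and n : ℕ with 1 ≤ n. For all positive semidefinite A, B ∈ Matrix d d ℂ and all t ∈ [0,1], ((((t • A + (1 − t) • B) ^ n).trace).re) ^ (1/(n:ℝ)) ≤ t * (((A ^ n).trace).re) ^ (1/(n:ℝ)) + (1 − t) * (((B ^ n).trace).re) ^ (1/(n:ℝ)), where x ^ (1/(n:ℝ)) denotes the real power Real.rpow. -/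
open Matrix ComplexOrder

/-!
Put `C = t A + (1 - t) B`, so that `Tr Cⁿ = t Tr (A Cⁿ⁻¹) + (1 - t) Tr (B Cⁿ⁻¹)`. Diagonalising
`A = U diag(a) U*` and `C = V diag(c) V*` gives `Tr (A Cⁿ⁻¹) = ∑ᵢⱼ |Wᵢⱼ|² aᵢ cⱼⁿ⁻¹` with `W = U* V`
unitary, so the weights `|Wᵢⱼ|²` form a doubly stochastic matrix, and Hölder's inequality with
exponents `n` and `n / (n - 1)` yields `Tr (A Cⁿ⁻¹) ≤ ‖A‖ₙ ‖C‖ₙⁿ⁻¹`, where `‖X‖ₙ = (Tr Xⁿ)^(1/n)`.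
Hence `‖C‖ₙⁿ ≤ (t ‖A‖ₙ + (1 - t) ‖B‖ₙ) ‖C‖ₙⁿ⁻¹`, and one divides by `‖C‖ₙⁿ⁻¹`.
-/

lemma Real.rpow_inv_mul_rpow {w x p : ℝ} (hw : 0 ≤ w) (hx : 0 ≤ x) (hp : p ≠ 0) :
    (w ^ p⁻¹ * x) ^ p = w * x ^ p := by
  rw [Real.mul_rpow (by positivity) hx, ← Real.rpow_mul hw, inv_mul_cancel₀ hp, Real.rpow_one]

namespace Matrix

variable {ι : Type*} [Fintype ι] [DecidableEq ι]

lemma sum_mul_mul_le_of_mem_doublyStochastic {P : Matrix ι ι ℝ} (hP : P ∈ doublyStochastic ℝ ι)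
    {a b : ι → ℝ} (ha : ∀ i, 0 ≤ a i) (hb : ∀ j, 0 ≤ b j) {p q : ℝ} (hpq : p.HolderConjugate q) :
    ∑ i, ∑ j, P i j * (a i * b j) ≤ (∑ i, a i ^ p) ^ p⁻¹ * (∑ j, b j ^ q) ^ q⁻¹ := by
  obtain ⟨hP0, hrow, hcol⟩ := mem_doublyStochastic_iff_sum.1 hP
  have holder := Real.inner_le_Lp_mul_Lq_of_nonneg (s := Finset.univ) hpq
    (f := fun x : ι × ι ↦ P x.1 x.2 ^ p⁻¹ * a x.1) (g := fun x ↦ P x.1 x.2 ^ q⁻¹ * b x.2)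
    (fun x _ ↦ by have := hP0 x.1 x.2; have := ha x.1; positivity)
    (fun x _ ↦ by have := hP0 x.1 x.2; have := hb x.2; positivity)
  simp only [one_div, Finset.univ_product_univ.symm, Finset.sum_product,
    Real.rpow_inv_mul_rpow (hP0 _ _) (ha _) hpq.ne_zero,
    Real.rpow_inv_mul_rpow (hP0 _ _) (hb _) hpq.symm.ne_zero] at holder
  have split_weight (i j : ι) : P i j * (a i * b j) = P i j ^ p⁻¹ * a i * (P i j ^ q⁻¹ * b j) := by
    rw [mul_mul_mul_comm, ← Real.rpow_add' (hP0 i j) (by simp [hpq.inv_add_inv_eq_one]),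
      hpq.inv_add_inv_eq_one, Real.rpow_one]
  calc ∑ i, ∑ j, P i j * (a i * b j)
      = ∑ i, ∑ j, P i j ^ p⁻¹ * a i * (P i j ^ q⁻¹ * b j) := by simp only [split_weight]
    _ ≤ (∑ i, ∑ j, P i j * a i ^ p) ^ p⁻¹ * (∑ i, ∑ j, P i j * b j ^ q) ^ q⁻¹ := holder
    _ = (∑ i, a i ^ p) ^ p⁻¹ * (∑ j, b j ^ q) ^ q⁻¹ := by
      rw [Finset.sum_comm (f := fun i j ↦ P i j * b j ^ q)]
      simp only [← Finset.sum_mul, hrow, hcol, one_mul]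

variable {𝕜 : Type*} [RCLike 𝕜]

lemma of_norm_sq_mem_doublyStochastic_of_mem_unitaryGroup {U : Matrix ι ι 𝕜}
    (hU : U ∈ unitaryGroup ι 𝕜) : of (fun i j ↦ ‖U i j‖ ^ 2) ∈ doublyStochastic ℝ ι := by
  refine mem_doublyStochastic_iff_sum.2 ⟨fun i j ↦ sq_nonneg ‖U i j‖, fun i ↦ ?_, fun j ↦ ?_⟩
  · have h := congr_fun₂ (mem_unitaryGroup_iff.mp hU) i i
    simp only [mul_apply, star_apply, RCLike.star_def, RCLike.mul_conj, one_apply_eq] at h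
    exact_mod_cast h
  · have h := congr_fun₂ (mem_unitaryGroup_iff'.mp hU) j j
    simp only [mul_apply, star_apply, RCLike.star_def, RCLike.conj_mul, one_apply_eq] at h
    exact_mod_cast h

lemma re_trace_conj_diagonal {U : Matrix ι ι 𝕜} (hU : U ∈ unitaryGroup ι 𝕜) (a : ι → ℝ) :
    RCLike.re (U * diagonal (RCLike.ofReal ∘ a) * star U).trace = ∑ i, a i := by
  rw [trace_mul_cycle, mem_unitaryGroup_iff'.mp hU, one_mul, trace_diagonal, map_sum]
  simp

lemma re_trace_conj_diagonal_mul_conj_diagonal {U V : Matrix ι ι 𝕜} (hU : U ∈ unitaryGroup ι 𝕜)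
    (a c : ι → ℝ) :
    RCLike.re ((U * diagonal (RCLike.ofReal ∘ a) * star U) *
        (V * diagonal (RCLike.ofReal ∘ c) * star V)).trace =
      ∑ i, ∑ j, ‖(star U * V) i j‖ ^ 2 * (a i * c j) := by
  set W := star U * V
  have regroup : (U * diagonal (RCLike.ofReal ∘ a) * star U) *
      (V * diagonal (RCLike.ofReal ∘ c) * star V) =
      U * (diagonal (RCLike.ofReal ∘ a) * (W * diagonal (RCLike.ofReal ∘ c) * star W)) *
        star U := by
    simp only [W, star_mul, star_star, Matrix.mul_assoc, mem_unitaryGroup_iff.mp hU,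
      Matrix.mul_one]
  rw [regroup, trace_mul_cycle, mem_unitaryGroup_iff'.mp hU, one_mul, trace, map_sum]
  refine Finset.sum_congr rfl fun i _ ↦ ?_
  rw [diag_apply, diagonal_mul, mul_apply, Finset.mul_sum, map_sum]
  simp only [mul_diagonal, star_apply, Function.comp_apply]
  refine Finset.sum_congr rfl fun j _ ↦ ?_
  rw [mul_right_comm (W i j), RCLike.star_def, RCLike.mul_conj]
  norm_cast
  ring

namespace IsHermitian

variable {A C : Matrix ι ι 𝕜}

lemma pow_eq_conj_diagonal (hA : A.IsHermitian) (k : ℕ) :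
    A ^ k = (hA.eigenvectorUnitary : Matrix ι ι 𝕜) *
      diagonal (RCLike.ofReal ∘ (hA.eigenvalues ^ k)) *
        star (hA.eigenvectorUnitary : Matrix ι ι 𝕜) := by
  conv_lhs => rw [hA.spectral_theorem, ← map_pow, diagonal_pow, Unitary.conjStarAlgAut_apply]
  congr
  ext i
  simp

lemma re_trace_pow (hA : A.IsHermitian) (k : ℕ) :
    RCLike.re (A ^ k).trace = ∑ i, hA.eigenvalues i ^ k := by
  rw [hA.pow_eq_conj_diagonal k,
    re_trace_conj_diagonal hA.eigenvectorUnitary.2 (hA.eigenvalues ^ k)]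
  rfl

lemma re_trace_mul_pow (hA : A.IsHermitian) (hC : C.IsHermitian) (k : ℕ) :
    RCLike.re (A * C ^ k).trace = ∑ i, ∑ j,
      ‖(star (hA.eigenvectorUnitary : Matrix ι ι 𝕜) * hC.eigenvectorUnitary) i j‖ ^ 2 *
        (hA.eigenvalues i * hC.eigenvalues j ^ k) := by
  conv_lhs => rw [hA.spectral_theorem, Unitary.conjStarAlgAut_apply, hC.pow_eq_conj_diagonal k]
  rw [re_trace_conj_diagonal_mul_conj_diagonal hA.eigenvectorUnitary.2 hA.eigenvalues
    (hC.eigenvalues ^ k)]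
  rfl

end IsHermitian

namespace PosSemidef

variable {A C : Matrix ι ι 𝕜}

lemma re_trace_pow_nonneg (hA : A.PosSemidef) (k : ℕ) : 0 ≤ RCLike.re (A ^ k).trace :=
  (RCLike.nonneg_iff.mp (hA.pow k).trace_nonneg).1

lemma re_trace_mul_pow_le (hA : A.PosSemidef) (hC : C.PosSemidef) {n : ℕ} (hn : 1 ≤ n) :
    RCLike.re (A * C ^ (n - 1)).trace ≤
      RCLike.re (A ^ n).trace ^ (1 / (n : ℝ)) * RCLike.re (C ^ n).trace ^ (1 - 1 / (n : ℝ)) := by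
  obtain rfl | hn := hn.eq_or_lt
  · simp
  have hpq : (n : ℝ).HolderConjugate (n : ℝ).conjExponent := .conjExponent (by exact_mod_cast hn)
  have hW : star (hA.1.eigenvectorUnitary : Matrix ι ι 𝕜) * hC.1.eigenvectorUnitary ∈
      unitaryGroup ι 𝕜 :=
    mul_mem (Unitary.star_mem hA.1.eigenvectorUnitary.2) hC.1.eigenvectorUnitary.2
  rw [hA.1.re_trace_mul_pow hC.1, hA.1.re_trace_pow, hC.1.re_trace_pow]
  convert sum_mul_mul_le_of_mem_doublyStochastic
    (of_norm_sq_mem_doublyStochastic_of_mem_unitaryGroup hW) hA.eigenvalues_nonneg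
    (fun j ↦ pow_nonneg (hC.eigenvalues_nonneg j) (n - 1)) hpq using 3
  · rfl
  · simp only [Real.rpow_natCast]
  · exact one_div _
  · refine Finset.sum_congr rfl fun j _ ↦ ?_
    rw [← Real.rpow_natCast _ (n - 1), ← Real.rpow_mul (hC.eigenvalues_nonneg j),
      Nat.cast_sub hn.le, Nat.cast_one, hpq.sub_one_mul_conj, Real.rpow_natCast]
  · rw [one_div, hpq.one_sub_inv]

end PosSemidef

end Matrix

lemma Real.rpow_le_of_le_mul_rpow_one_sub {x K r : ℝ} (hx : 0 < x) (h : x ≤ K * x ^ (1 - r)) :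
    x ^ r ≤ K := by
  refine le_of_mul_le_mul_right ?_ (Real.rpow_pos_of_pos hx (1 - r))
  rwa [← Real.rpow_add hx, add_sub_cancel, Real.rpow_one]

theorem trace_pow_rpow_convex_general {d : Type*} [Fintype d] [DecidableEq d]
    (n : ℕ) (hn : 1 ≤ n)
    (A B : Matrix d d ℂ) (hA : A.PosSemidef) (hB : B.PosSemidef)
    (t : ℝ) (ht0 : 0 ≤ t) (ht1 : t ≤ 1) :
    ((((t • A + (1 - t) • B) ^ n).trace).re) ^ (1 / (n : ℝ)) ≤
      t * (((A ^ n).trace).re) ^ (1 / (n : ℝ))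
        + (1 - t) * (((B ^ n).trace).re) ^ (1 / (n : ℝ)) := by
  have hs : 0 ≤ 1 - t := by linarith
  set C := t • A + (1 - t) • B
  have hC : C.PosSemidef := (hA.smul ht0).add (hB.smul hs)
  have hAn : 0 ≤ ((A ^ n).trace).re := hA.re_trace_pow_nonneg n
  have hBn : 0 ≤ ((B ^ n).trace).re := hB.re_trace_pow_nonneg n
  have hCn : 0 ≤ ((C ^ n).trace).re := hC.re_trace_pow_nonneg n
  obtain hC0 | hCpos := hCn.eq_or_lt
  · rw [← hC0, Real.zero_rpow (by positivity)]
    positivity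
  have holderA : ((A * C ^ (n - 1)).trace).re ≤
      ((A ^ n).trace).re ^ (1 / (n : ℝ)) * ((C ^ n).trace).re ^ (1 - 1 / (n : ℝ)) :=
    hA.re_trace_mul_pow_le hC hn
  have holderB : ((B * C ^ (n - 1)).trace).re ≤
      ((B ^ n).trace).re ^ (1 / (n : ℝ)) * ((C ^ n).trace).re ^ (1 - 1 / (n : ℝ)) :=
    hB.re_trace_mul_pow_le hC hn
  refine Real.rpow_le_of_le_mul_rpow_one_sub hCpos ?_
  calc ((C ^ n).trace).re
      = t * ((A * C ^ (n - 1)).trace).re + (1 - t) * ((B * C ^ (n - 1)).trace).re := by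
        rw [← mul_pow_sub_one (by omega) C]
        simp [C, add_mul, trace_add, trace_smul]
    _ ≤ _ := add_le_add (mul_le_mul_of_nonneg_left holderA ht0)
        (mul_le_mul_of_nonneg_left holderB hs)
    _ = _ := by ring

/-- **Convexity of `ρ ↦ (Tr ρⁿ)^{1/n}` on positive semidefinite matrices**
(Lemma: `1 − (C_n)^{1/n}` is a PSEM): for PSD `A`, `B`, `n ≥ 1`, `t ∈ [0,1]`,
`(Re tr ((t•A+(1-t)•B)^n))^{1/n} ≤ t (Re tr A^n)^{1/n} + (1-t) (Re tr B^n)^{1/n}`,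
where `x ^ (1/(n:ℝ))` is `Real.rpow`. -/
theorem trace_pow_rpow_convex {d : Type*} [Fintype d] [DecidableEq d] [Nonempty d]
    (n : ℕ) (hn : 1 ≤ n)
    (A B : Matrix d d ℂ) (hA : A.PosSemidef) (hB : B.PosSemidef)
    (t : ℝ) (ht0 : 0 ≤ t) (ht1 : t ≤ 1) :
    ((((t • A + (1 - t) • B) ^ n).trace).re) ^ (1 / (n : ℝ)) ≤
      t * (((A ^ n).trace).re) ^ (1 / (n : ℝ))
        + (1 - t) * (((B ^ n).trace).re) ^ (1 / (n : ℝ)) :=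
  trace_pow_rpow_convex_general n hn A B hA hB t ht0 ht1
end

section
/- Bounds from composite monotones are weaker (Appendix Theorem). Let k : ℕ with 1 ≤ k and let G : (Fin k → ℝ) → ℝ be concave on the nonnegative orthant {x | ∀ i, 0 ≤ x i}, monotone on it with respect to the componentwise order, and satisfy 0 ≤ G 0. Let x, x' : Fin k → ℝ with 0 ≤ x i for all i, 0 < x' i for all i, and 0 < G x'. Then G x / G x' ≥ min (min over i : Fin k of (x i / x' i)) 1. -/
/-- **Bounds from composite monotones are weaker** (Appendix Theorem): if `G`
is concave and monotone on the nonnegative orthant with `0 ≤ G 0`, `x` is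
componentwise nonnegative, `x'` componentwise positive and `0 < G x'`, then
`G x / G x' ≥ min (minᵢ (x i / x' i)) 1`. -/
theorem composite_bound_weaker (k : ℕ) (hk : 1 ≤ k)
    (G : (Fin k → ℝ) → ℝ)
    (hG_conc : ConcaveOn ℝ {x : Fin k → ℝ | ∀ i, 0 ≤ x i} G)
    (hG_mono : MonotoneOn G {x : Fin k → ℝ | ∀ i, 0 ≤ x i})
    (hG0 : 0 ≤ G 0)
    (x x' : Fin k → ℝ) (hx : ∀ i, 0 ≤ x i) (hx' : ∀ i, 0 < x' i)
    (hGx' : 0 < G x') :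
    min (Finset.univ.inf' ⟨⟨0, hk⟩, Finset.mem_univ _⟩ (fun i => x i / x' i)) 1
      ≤ G x / G x' := by
  set m := Finset.univ.inf' ⟨⟨0, hk⟩, Finset.mem_univ _⟩ (fun i => x i / x' i) with hm
  set t := min m 1 with ht
  have ht1 : t ≤ 1 := min_le_right _ _
  have ht0 : 0 ≤ t := by
    apply le_min _ zero_le_one
    apply Finset.le_inf'
    intro i _
    exact div_nonneg (hx i) (hx' i).le
  have htle : ∀ i, t * x' i ≤ x i := by
    intro i
    have h1 : t ≤ x i / x' i :=
      le_trans (min_le_left _ _) (Finset.inf'_le _ (Finset.mem_univ i))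
    calc t * x' i ≤ (x i / x' i) * x' i := by
          exact mul_le_mul_of_nonneg_right h1 (hx' i).le
      _ = x i := div_mul_cancel₀ _ (hx' i).ne'
  have hx'mem : x' ∈ {x : Fin k → ℝ | ∀ i, 0 ≤ x i} := fun i => (hx' i).le
  have h0mem : (0 : Fin k → ℝ) ∈ {x : Fin k → ℝ | ∀ i, 0 ≤ x i} := fun i => le_rfl
  have htx'mem : t • x' ∈ {x : Fin k → ℝ | ∀ i, 0 ≤ x i} := fun i =>
    mul_nonneg ht0 (hx' i).le
  have hconc : t * G x' + (1 - t) * G 0 ≤ G (t • x' + (1 - t) • (0 : Fin k → ℝ)) :=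
    hG_conc.2 hx'mem h0mem ht0 (by linarith) (by ring)
  have heq : t • x' + (1 - t) • (0 : Fin k → ℝ) = t • x' := by simp
  rw [heq] at hconc
  have hmono : G (t • x') ≤ G x := by
    apply hG_mono htx'mem hx
    intro i
    exact htle i
  have key : t * G x' ≤ G x := by
    have : t * G x' ≤ t * G x' + (1 - t) * G 0 := by nlinarith
    linarith

  exact (le_div_iff₀ hGx').mpr key
end

section
/- Convexity of the convex roof extension (part of Horodecki's Lemma). Let d be a finite nonempty type and ν : (d → ℂ) → ℝ a function with ν ψ ≥ 0 for every unit vector ψ. For a density matrix ρ ∈ Matrix d d ℂ (positive semidefinite with trace 1), call a finite family ((p_i, ψ_i))_{i ∈ s} a pure-state ensemble for ρ if p_i > 0, ∑ i ∈ s, p_i = 1, each ψ_i : d → ℂ is a unit vector, and ∑ i ∈ s, p_i • vecMulVec ψ_i (star ψ_i) = ρ; define the convex roof CR_ν(ρ) := sInf { ∑ i ∈ s, p_i * ν ψ_i | ((p_i, ψ_i)) an ensemble for ρ }. Then for any density matrices ρ₁, ρ₂, any ensembles ((p_i, ψ_i)) for ρ₁ and ((q_j, φ_j)) for ρ₂,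 and any t ∈ (0,1): CR_ν(t • ρ₁ + (1 − t) • ρ₂) ≤ t * ∑ i, p_i * ν ψ_i + (1 − t) * ∑ j, q_j * ν φ_j. In particular CR_ν is convex on density matrices. -/
open Matrix ComplexOrder

/-- A finite family `(p i, ψ i)_{i ∈ s}` is a pure-state ensemble for `ρ` if the
weights are positive and sum to `1`, each `ψ i` is a unit vector, and
`∑ i ∈ s, p i • |ψ i⟩⟨ψ i| = ρ`. -/
def IsEnsemble {d : Type*} [Fintype d] {ι : Type*} (s : Finset ι)
    (p : ι → ℝ) (ψ : ι → d → ℂ) (ρ : Matrix d d ℂ) : Prop :=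
  (∀ i ∈ s, 0 < p i) ∧ (∑ i ∈ s, p i = 1) ∧
  (∀ i ∈ s, ∑ x, ‖ψ i x‖ ^ 2 = 1) ∧
  (∑ i ∈ s, p i • Matrix.vecMulVec (ψ i) (star (ψ i)) = ρ)

/-- The convex roof extension of `ν`:
`CR_ν(ρ) = inf { ∑ i ∈ s, p i * ν (ψ i) | (p, ψ) an ensemble for ρ }`. -/
noncomputable def convexRoof {d : Type*} [Fintype d]
    (ν : (d → ℂ) → ℝ) (ρ : Matrix d d ℂ) : ℝ :=
  sInf {r : ℝ | ∃ (ι : Type) (s : Finset ι) (p : ι → ℝ) (ψ : ι → d → ℂ),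
    IsEnsemble s p ψ ρ ∧ r = ∑ i ∈ s, p i * ν (ψ i)}

/-! Juxtaposing an ensemble for `ρ₁` with weights scaled by `t` and one for `ρ₂` with weights
scaled by `1 - t` gives an ensemble for `t • ρ₁ + (1 - t) • ρ₂` whose average of `ν` is the
right-hand side. Since `ν ≥ 0` on unit vectors, every ensemble average is `≥ 0`, so the infimum
defining the convex roof is over a set bounded below and is dominated by that average. -/

section

variable {d : Type*} [Fintype d]

theorem IsEnsemble.disjSum {ι₁ ι₂ : Type*} {s₁ : Finset ι₁} {p : ι₁ → ℝ}
    {ψ : ι₁ → d → ℂ} {ρ₁ : Matrix d d ℂ} {s₂ : Finset ι₂} {q : ι₂ → ℝ}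
    {φ : ι₂ → d → ℂ} {ρ₂ : Matrix d d ℂ} (hens₁ : IsEnsemble s₁ p ψ ρ₁)
    (hens₂ : IsEnsemble s₂ q φ ρ₂) {a b : ℝ} (ha : 0 < a) (hb : 0 < b) (hab : a + b = 1) :
    IsEnsemble (s₁.disjSum s₂) (Sum.elim (fun i => a * p i) (fun j => b * q j))
      (Sum.elim ψ φ) (a • ρ₁ + b • ρ₂) := by
  obtain ⟨hp, hp_sum, hψ, rfl⟩ := hens₁
  obtain ⟨hq, hq_sum, hφ, rfl⟩ := hens₂
  refine ⟨?_, ?_, ?_, ?_⟩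
  · rintro (i | j) hij <;> simp only [Finset.inl_mem_disjSum, Finset.inr_mem_disjSum] at hij
    · exact mul_pos ha (hp i hij)
    · exact mul_pos hb (hq j hij)
  · simp only [Finset.sum_disjSum, Sum.elim_inl, Sum.elim_inr, ← Finset.mul_sum, hp_sum,
      hq_sum, mul_one, hab]
  · rintro (i | j) hij <;> simp only [Finset.inl_mem_disjSum, Finset.inr_mem_disjSum] at hij
    · exact hψ i hij
    · exact hφ j hij
  · simp only [Finset.sum_disjSum, Sum.elim_inl, Sum.elim_inr, mul_smul, ← Finset.smul_sum]

theorem convexRoof_le_of_isEnsemble {ν : (d → ℂ) → ℝ}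
    (hν : ∀ ψ : d → ℂ, (∑ x, ‖ψ x‖ ^ 2 = 1) → 0 ≤ ν ψ) {ρ : Matrix d d ℂ} {ι : Type}
    {s : Finset ι} {p : ι → ℝ} {ψ : ι → d → ℂ} (hens : IsEnsemble s p ψ ρ) :
    convexRoof ν ρ ≤ ∑ i ∈ s, p i * ν (ψ i) := by
  refine csInf_le ⟨0, ?_⟩ ⟨ι, s, p, ψ, hens, rfl⟩
  rintro r ⟨ι', s', p', ψ', ⟨hp', -, hψ', -⟩, rfl⟩
  exact Finset.sum_nonneg fun i hi => mul_nonneg (hp' i hi).le (hν _ (hψ' i hi))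

end

theorem convexRoof_convex_general {d : Type*} [Fintype d]
    (ν : (d → ℂ) → ℝ)
    (hν : ∀ ψ : d → ℂ, (∑ x, ‖ψ x‖ ^ 2 = 1) → 0 ≤ ν ψ)
    (ρ₁ ρ₂ : Matrix d d ℂ)
    {ι₁ ι₂ : Type} (s₁ : Finset ι₁) (p : ι₁ → ℝ) (ψ : ι₁ → d → ℂ)
    (hens₁ : IsEnsemble s₁ p ψ ρ₁)
    (s₂ : Finset ι₂) (q : ι₂ → ℝ) (φ : ι₂ → d → ℂ)
    (hens₂ : IsEnsemble s₂ q φ ρ₂)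
    (t : ℝ) (ht0 : 0 < t) (ht1 : t < 1) :
    convexRoof ν (t • ρ₁ + (1 - t) • ρ₂) ≤
      t * ∑ i ∈ s₁, p i * ν (ψ i) + (1 - t) * ∑ j ∈ s₂, q j * ν (φ j) := by
  have hmix := hens₁.disjSum hens₂ ht0 (sub_pos.mpr ht1) (add_sub_cancel t 1)
  calc convexRoof ν (t • ρ₁ + (1 - t) • ρ₂)
      ≤ ∑ k ∈ s₁.disjSum s₂, Sum.elim (fun i => t * p i) (fun j => (1 - t) * q j) k *
          ν (Sum.elim ψ φ k) := convexRoof_le_of_isEnsemble hν hmix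
    _ = t * ∑ i ∈ s₁, p i * ν (ψ i) + (1 - t) * ∑ j ∈ s₂, q j * ν (φ j) := by
      simp only [Finset.sum_disjSum, Sum.elim_inl, Sum.elim_inr, Finset.mul_sum, mul_assoc]

/-- **Convexity of the convex roof extension** (part of Horodecki's Lemma):
for density matrices `ρ₁, ρ₂` with ensembles `(p, ψ)` and `(q, φ)` and
`t ∈ (0,1)`,
`CR_ν (t•ρ₁ + (1-t)•ρ₂) ≤ t * ∑ pᵢ ν(ψᵢ) + (1-t) * ∑ qⱼ ν(φⱼ)`. -/
theorem convexRoof_convex {d : Type*} [Fintype d] [Nonempty d]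
    (ν : (d → ℂ) → ℝ)
    (hν : ∀ ψ : d → ℂ, (∑ x, ‖ψ x‖ ^ 2 = 1) → 0 ≤ ν ψ)
    (ρ₁ ρ₂ : Matrix d d ℂ)
    (h₁ : ρ₁.PosSemidef ∧ ρ₁.trace = 1) (h₂ : ρ₂.PosSemidef ∧ ρ₂.trace = 1)
    {ι₁ ι₂ : Type} (s₁ : Finset ι₁) (p : ι₁ → ℝ) (ψ : ι₁ → d → ℂ)
    (hens₁ : IsEnsemble s₁ p ψ ρ₁)
    (s₂ : Finset ι₂) (q : ι₂ → ℝ) (φ : ι₂ → d → ℂ)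
    (hens₂ : IsEnsemble s₂ q φ ρ₂)
    (t : ℝ) (ht0 : 0 < t) (ht1 : t < 1) :
    convexRoof ν (t • ρ₁ + (1 - t) • ρ₂) ≤
      t * ∑ i ∈ s₁, p i * ν (ψ i) + (1 - t) * ∑ j ∈ s₂, q j * ν (φ j) :=
  convexRoof_convex_general ν hν ρ₁ ρ₂ s₁ p ψ hens₁ s₂ q φ hens₂ t ht0 ht1
end

section
/- A reflecting cut crosses a shortest path exactly once (Lemma once). Let G be a simple graph on a type V, let φ : V ≃ V be an automorphism of G (G.Adj u v ↔ G.Adj (φ u) (φ v)) with φ (φ v) = v for all v, and let S : Set V satisfy: (i) for all v, v ∈ S ↔ φ v ∉ S, and (ii) for all u v, G.Adj u v → u ∈ S → v ∉ S → v = φ u. Suppose u ∈ S, v ∉ S, and p : G.Walk u v is a shortest walk, p.length = G.dist u v. Then exactly one step of p crosses the cut: the number of darts (x, y) of p with (x ∈ S) ≠ (y ∈ S) equals 1. -/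
open SimpleGraph

section Aux
variable {V : Type*} {G : SimpleGraph V}

/-- Reflection lemma: a walk from `c ∉ S` to `b ∈ S` yields a strictly shorter
walk from `φ c` to `b`. -/
private lemma reflect_aux (φ : V ≃ V)
    (hadj : ∀ u v, G.Adj u v ↔ G.Adj (φ u) (φ v))
    (S : Set V)
    (hcut' : ∀ u v, G.Adj u v → u ∉ S → v ∈ S → v = φ u) :
    ∀ {c b : V} (q : G.Walk c b), c ∉ S → b ∈ S →
      ∃ r : G.Walk (φ c) b, r.length + 1 ≤ q.length := by
  intro c b q
  induction q with
  | nil => intro hc hb; exact absurd hb hc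
  | @cons c d e h q ih =>
    intro hc hb
    by_cases hd : d ∈ S
    · have hdc : d = φ c := hcut' c d h hc hd
      exact ⟨q.copy hdc rfl, by simp⟩
    · obtain ⟨r, hr⟩ := ih hd hb
      exact ⟨SimpleGraph.Walk.cons ((hadj c d).mp h) r, by simpa using Nat.succ_le_succ hr⟩

private lemma suffix_shortest {a c b : V} (h : G.Adj a c) (q : G.Walk c b)
    (hp : q.length + 1 = G.dist a b) : q.length = G.dist c b := by
  have h1 : G.dist c b ≤ q.length := SimpleGraph.dist_le q
  obtain ⟨w, hw⟩ := q.reachable.exists_walk_length_eq_dist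
  have h2 : G.dist a b ≤ w.length + 1 := by
    have := SimpleGraph.dist_le (SimpleGraph.Walk.cons h w)
    simpa using this
  omega

/-- A shortest walk between two vertices on the same side of a reflecting cut
never crosses the cut. -/
private lemma sameside (φ : V ≃ V)
    (hadj : ∀ u v, G.Adj u v ↔ G.Adj (φ u) (φ v))
    (hinv : ∀ v, φ (φ v) = v)
    (S : Set V) [DecidablePred (· ∈ S)]
    (hcut : ∀ u v, G.Adj u v → u ∈ S → v ∉ S → v = φ u)
    (hcut' : ∀ u v, G.Adj u v → u ∉ S → v ∈ S → v = φ u) :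
    ∀ {a b : V} (p : G.Walk a b), a ∈ S → b ∈ S → p.length = G.dist a b →
      (p.darts.filter
        (fun d => decide (d.toProd.1 ∈ S) != decide (d.toProd.2 ∈ S))).length = 0 := by
  intro a b p
  induction p with
  | nil => intro _ _ _; simp
  | @cons a c b h q ih =>
    intro ha hb hlen
    rw [SimpleGraph.Walk.length_cons] at hlen
    have hq : q.length = G.dist c b := suffix_shortest h q hlen
    by_cases hc : c ∈ S
    · have hdart : (decide (a ∈ S) != decide (c ∈ S)) = false := by simp [ha, hc]
      simp only [SimpleGraph.Walk.darts_cons, List.filter_cons, hdart]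
      simpa using ih hc hb hq
    · -- contradiction : reflect
      exfalso
      obtain ⟨r, hr⟩ := reflect_aux φ hadj S hcut' q hc hb
      have hca : c = φ a := hcut a c h ha hc
      have hfc : φ c = a := by rw [hca, hinv]
      have hr' : G.dist a b ≤ r.length := by
        have := SimpleGraph.dist_le (r.copy hfc rfl)
        simpa using this
      omega

private lemma mixed (φ : V ≃ V)
    (hadj : ∀ u v, G.Adj u v ↔ G.Adj (φ u) (φ v))
    (hinv : ∀ v, φ (φ v) = v)
    (S : Set V) [DecidablePred (· ∈ S)]
    (hside : ∀ v, v ∈ S ↔ φ v ∉ S)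
    (hcut : ∀ u v, G.Adj u v → u ∈ S → v ∉ S → v = φ u) :
    ∀ {a b : V} (p : G.Walk a b), a ∈ S → b ∉ S → p.length = G.dist a b →
      (p.darts.filter
        (fun d => decide (d.toProd.1 ∈ S) != decide (d.toProd.2 ∈ S))).length = 1 := by
  have hcut' : ∀ u v, G.Adj u v → u ∉ S → v ∈ S → v = φ u := by
    intro u v h hu hv
    have := hcut v u h.symm hv hu
    rw [this, hinv]
  intro a b p
  induction p with
  | nil => intro ha hb _; exact absurd ha hb
  | @cons a c b h q ih =>
    intro ha hb hlen
    rw [SimpleGraph.Walk.length_cons] at hlen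
    have hq : q.length = G.dist c b := suffix_shortest h q hlen
    by_cases hc : c ∈ S
    · have hdart : (decide (a ∈ S) != decide (c ∈ S)) = false := by simp [ha, hc]
      simp only [SimpleGraph.Walk.darts_cons, List.filter_cons, hdart]
      exact ih hc hb hq
    · have hdart : (decide (a ∈ S) != decide (c ∈ S)) = true := by simp [ha, hc]
      simp only [SimpleGraph.Walk.darts_cons, List.filter_cons, hdart, List.length_cons]
      -- remaining walk stays outside S
      haveI : DecidablePred (· ∈ Sᶜ) := fun x => @instDecidableNot _ (‹DecidablePred (· ∈ S)› x)
      have hz := sameside (G := G) φ hadj hinv (Sᶜ)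
        (fun u v huv hu hv => hcut' u v huv hu (by simpa using hv))
        (fun u v huv hu hv => hcut u v huv (by simpa using hu) hv)
        q hc hb hq
      have hfe : (fun d : G.Dart => decide (d.toProd.1 ∈ Sᶜ) != decide (d.toProd.2 ∈ Sᶜ))
          = (fun d : G.Dart => decide (d.toProd.1 ∈ S) != decide (d.toProd.2 ∈ S)) := by
        funext d
        rcases Decidable.em (d.toProd.1 ∈ S) with h1 | h1 <;>
          rcases Decidable.em (d.toProd.2 ∈ S) with h2 | h2 <;>
          simp [Set.mem_compl_iff, h1, h2]
      rw [hfe] at hz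
      simp [hz]

end Aux

/-- **A reflecting cut crosses a shortest path exactly once** (Lemma once).
Given an involutive automorphism `φ` of a simple graph `G`, a side `S` of the
corresponding cut (with `v ∈ S ↔ φ v ∉ S` and every edge crossing the cut of
the form `(u, φ u)`), if `u ∈ S`, `v ∉ S` and `p` is a shortest walk from `u`
to `v`, then exactly one dart of `p` crosses the cut. -/
theorem reflecting_cut_crosses_shortest_path_once
    {V : Type*} (G : SimpleGraph V) (φ : V ≃ V)
    (hφ_adj : ∀ u v, G.Adj u v ↔ G.Adj (φ u) (φ v))
    (hφ_inv : ∀ v, φ (φ v) = v)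
    (S : Set V) [DecidablePred (· ∈ S)]
    (hside : ∀ v, v ∈ S ↔ φ v ∉ S)
    (hcut : ∀ u v, G.Adj u v → u ∈ S → v ∉ S → v = φ u)
    {u v : V} (hu : u ∈ S) (hv : v ∉ S)
    (p : G.Walk u v) (hp : p.length = G.dist u v) :
    (p.darts.filter
      (fun d => decide (d.toProd.1 ∈ S) != decide (d.toProd.2 ∈ S))).length
      = 1 := by
  exact mixed φ hφ_adj hφ_inv S hside hcut p hu hv hp
end

section
/- Vertex-reflecting is equivalent to edge-reflecting (Lemma edge-r-vertex). Let (V, C, f, π) be a connected ψ-graph: V a finite type, C a type of colors, f : C → V → V with each f c an involution without fixed points (f c (f c v) = v, f c v ≠ v), simple (c ≠ c' → f c v ≠ f c' v for all v), connected (any two vertices are joined by a chain of edges v ↦ f c v), and π : V → Bool with π (f c v) = !(π v). Then the following are equivalent: (1) for every color c and every pair of disjoint c-edges {u, f c u} and {u', f c u'} (the four vertices pairwise distinct) there exists a reflecting cut (S, φ) with u, f c u ∈ S and u', f c u' ∉ S; (2) for every pair of distinct vertices u ≠ v there exists a reflecting cut (S, φ) with u ∈ S and v ∉ S. -/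
/-- A ψ-graph: a color-regular graph given by edge maps `f c` (fixed-point-free
involutions, distinct colors giving distinct neighbors), connected, with a
parity (bipartite) structure `π` flipped by every edge. -/
structure PsiGraph (V C : Type*) where
  f : C → V → V
  π : V → Bool
  invol : ∀ c v, f c (f c v) = v
  nofix : ∀ c v, f c v ≠ v
  simple : ∀ c c' v, c ≠ c' → f c v ≠ f c' v
  conn : ∀ u v : V, Relation.ReflTransGen (fun x y => ∃ c, y = f c x) u v
  parity : ∀ c v, π (f c v) = !(π v)

/-- A reflecting cut of a ψ-graph: a side `S` together with an involutive
permutation `φ` commuting with all edge maps, flipping parity, exchanging `S`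
with its complement, such that every cut edge joins a vertex to its `φ`-image. -/
def IsReflectingCut {V C : Type*} (G : PsiGraph V C) (S : Set V)
    (φ : Equiv.Perm V) : Prop :=
  (∀ v, φ (φ v) = v) ∧ (∀ c v, φ (G.f c v) = G.f c (φ v)) ∧
  (∀ v, G.π (φ v) = !(G.π v)) ∧ (∀ v, v ∈ S ↔ φ v ∉ S) ∧
  (∀ c v, v ∈ S → G.f c v ∉ S → G.f c v = φ v)

/-- Chains of length at most `n` in a ψ-graph. -/
def PsiChain {V C : Type*} (G : PsiGraph V C) : ℕ → V → V → Prop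
  | 0, x, y => x = y
  | n+1, x, y => x = y ∨ ∃ c, PsiChain G n (G.f c x) y

lemma psiChain_exists {V C : Type*} (G : PsiGraph V C) (x y : V) :
    ∃ n, PsiChain G n x y := by
  have h := G.conn x y
  induction h using Relation.ReflTransGen.head_induction_on with
  | refl => exact ⟨0, rfl⟩
  | head step _ ih =>
    obtain ⟨c, rfl⟩ := step
    obtain ⟨n, hn⟩ := ih
    exact ⟨n + 1, Or.inr ⟨c, hn⟩⟩

lemma psiChain_map {V C : Type*} (G : PsiGraph V C) (φ : Equiv.Perm V)
    (hφ : ∀ c v, φ (G.f c v) = G.f c (φ v)) :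
    ∀ n x y, PsiChain G n x y → PsiChain G n (φ x) (φ y) := by
  intro n
  induction n with
  | zero => intro x y h; exact congrArg φ h
  | succ m ih =>
    intro x y h
    rcases h with rfl | ⟨c, hc⟩
    · exact Or.inl rfl
    · exact Or.inr ⟨c, by rw [← hφ]; exact ih _ _ hc⟩

lemma psi_key {V C : Type*} (G : PsiGraph V C) (S : Set V) (φ : Equiv.Perm V)
    (hinv : ∀ v, φ (φ v) = v) (hcom : ∀ c v, φ (G.f c v) = G.f c (φ v))
    (hce : ∀ c v, v ∈ S → G.f c v ∉ S → G.f c v = φ v) :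
    ∀ n x y, x ∈ S → y ∉ S → PsiChain G (n+1) x y →
      PsiChain G n (φ x) y ∧ PsiChain G n x (φ y) := by
  intro n
  induction n with
  | zero =>
    intro x y hx hy h
    rcases h with rfl | ⟨c, hc⟩
    · exact absurd hx hy
    · have hc' : G.f c x = y := hc
      have hfx : G.f c x ∉ S := by rw [hc']; exact hy
      have he := hce c x hx hfx
      constructor
      · show φ x = y
        rw [← he]; exact hc'
      · show x = φ y
        rw [← hc', he, hinv]
  | succ m ih =>
    intro x y hx hy h
    rcases h with rfl | ⟨c, hc⟩
    · exact absurd hx hy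
    · by_cases hS : G.f c x ∈ S
      · obtain ⟨A, B⟩ := ih (G.f c x) y hS hy hc
        constructor
        · exact Or.inr ⟨c, by rw [← hcom]; exact A⟩
        · exact Or.inr ⟨c, B⟩
      · have he := hce c x hx hS
        constructor
        · rw [← he]; exact hc
        · have hm := psiChain_map G φ hcom (m+1) _ _ hc
          rw [he, hinv] at hm
          exact hm

/-- Distance in a ψ-graph. -/
noncomputable def psiDist {V C : Type*} (G : PsiGraph V C) (x y : V) : ℕ :=
  @Nat.find (fun n => PsiChain G n x y) (Classical.decPred _) (psiChain_exists G x y)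

lemma psiDist_spec {V C : Type*} (G : PsiGraph V C) (x y : V) :
    PsiChain G (psiDist G x y) x y :=
  @Nat.find_spec (fun n => PsiChain G n x y) (Classical.decPred _) (psiChain_exists G x y)

lemma psiDist_le {V C : Type*} (G : PsiGraph V C) {x y : V} {n : ℕ}
    (h : PsiChain G n x y) : psiDist G x y ≤ n :=
  @Nat.find_min' (fun n => PsiChain G n x y) (Classical.decPred _) (psiChain_exists G x y) n h

lemma psi_good {V C : Type*} (G : PsiGraph V C) (S : Set V) (φ : Equiv.Perm V)
    (hcut : IsReflectingCut G S φ) (c : C) (x y : V)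
    (h1 : psiDist G x y ≤ psiDist G (G.f c x) y)
    (h2 : psiDist G x y ≤ psiDist G x (G.f c y))
    (hx : x ∈ S) (hy : y ∉ S) : G.f c x ∈ S ∧ G.f c y ∉ S := by
  obtain ⟨hinv, hcom, -, -, hce⟩ := hcut
  have hd : PsiChain G (psiDist G x y) x y := psiDist_spec G x y
  have hne : psiDist G x y ≠ 0 := by
    intro h0
    rw [h0] at hd
    exact hy (hd ▸ hx)
  obtain ⟨k, hk⟩ := Nat.exists_eq_succ_of_ne_zero hne
  rw [hk] at hd
  obtain ⟨A, B⟩ := psi_key G S φ hinv hcom hce k x y hx hy hd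
  constructor
  · by_contra hfx
    have he := hce c x hx hfx
    have hle : psiDist G (G.f c x) y ≤ k := psiDist_le G (by rw [he]; exact A)
    omega
  · intro hfy
    have h5 : G.f c (G.f c y) ∉ S := by rw [G.invol]; exact hy
    have he := hce c (G.f c y) hfy h5
    have he2 : φ y = G.f c y := by
      rw [G.invol] at he
      nth_rewrite 1 [he]
      rw [hinv]
    have hle : psiDist G x (G.f c y) ≤ k := psiDist_le G (by rw [← he2]; exact B)
    omega

lemma psi_helper {V C : Type*} (G : PsiGraph V C)
    (hvr : ∀ u v : V, u ≠ v →
      ∃ (S : Set V) (φ : Equiv.Perm V), IsReflectingCut G S φ ∧ u ∈ S ∧ v ∉ S)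
    (c : C) (x y : V) (hxy : x ≠ y)
    (h1 : psiDist G x y ≤ psiDist G (G.f c x) y)
    (h2 : psiDist G x y ≤ psiDist G x (G.f c y)) :
    ∃ (S : Set V) (φ : Equiv.Perm V), IsReflectingCut G S φ ∧
      x ∈ S ∧ G.f c x ∈ S ∧ y ∉ S ∧ G.f c y ∉ S := by
  obtain ⟨S, φ, hcut, hx, hy⟩ := hvr x y hxy
  obtain ⟨hgx, hgy⟩ := psi_good G S φ hcut c x y h1 h2 hx hy
  exact ⟨S, φ, hcut, hx, hgx, hy, hgy⟩

/-- **Vertex-reflecting is equivalent to edge-reflecting** (Lemma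
edge-r-vertex): a connected ψ-graph separates any two disjoint `c`-edges by a
reflecting cut (for every color `c`) if and only if it separates any two
distinct vertices by a reflecting cut. -/
theorem edgeReflecting_iff_vertexReflecting {V C : Type*} [Fintype V]
    (G : PsiGraph V C) :
    (∀ (c : C) (u u' : V),
        u ≠ u' → u ≠ G.f c u' → G.f c u ≠ u' → G.f c u ≠ G.f c u' →
        ∃ (S : Set V) (φ : Equiv.Perm V), IsReflectingCut G S φ ∧
          u ∈ S ∧ G.f c u ∈ S ∧ u' ∉ S ∧ G.f c u' ∉ S)
    ↔
    (∀ u v : V, u ≠ v →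
        ∃ (S : Set V) (φ : Equiv.Perm V), IsReflectingCut G S φ ∧
          u ∈ S ∧ v ∉ S) := by
  constructor
  · -- edge-reflecting → vertex-reflecting
    intro hedge u v huv
    obtain hcase | ⟨w, ⟨c, hw⟩, -⟩ := Relation.ReflTransGen.cases_head (G.conn u v)
    · exact absurd hcase huv
    clear hw w
    by_cases hfc : G.f c u = v
    · by_cases hex : ∃ c', G.f c' v ≠ u
      · obtain ⟨c', hc'⟩ := hex
        have hcc : c' ≠ c := by
          rintro rfl
          apply hc'
          rw [← hfc, G.invol]
        have hb1 : u ≠ G.f c' v := Ne.symm hc'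
        have hb2 : G.f c' u ≠ v := by
          intro h
          exact G.simple c' c u hcc (h.trans hfc.symm)
        have hb3 : G.f c' u ≠ G.f c' v := by
          intro h
          apply huv
          have := congrArg (G.f c') h
          rwa [G.invol, G.invol] at this
        obtain ⟨S, φ, hcut, h1, -, h3, -⟩ := hedge c' u v huv hb1 hb2 hb3
        exact ⟨S, φ, hcut, h1, h3⟩
      · push_neg at hex
        -- every color equals c; use the parity cut
        have hcol : ∀ c'' : C, G.f c'' = G.f c := by
          intro c''
          by_cases h : c'' = c
          · rw [h]
          · exfalso
            apply G.simple c'' c v h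
            rw [hex c'', hex c]
        refine ⟨{w | G.π w = G.π u}, ⟨G.f c, G.f c, G.invol c, G.invol c⟩,
          ⟨?_, ?_, ?_, ?_, ?_⟩, ?_, ?_⟩
        · intro w; exact G.invol c w
        · intro c'' w
          show G.f c (G.f c'' w) = G.f c'' (G.f c w)
          rw [hcol c'']
        · intro w; exact G.parity c w
        · intro w
          show G.π w = G.π u ↔ ¬(G.π (G.f c w) = G.π u)
          rw [G.parity]
          cases G.π w <;> cases G.π u <;> simp
        · intro c'' w _ _
          show G.f c'' w = G.f c w
          rw [hcol c'']
        · exact rfl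
        · show ¬(G.π v = G.π u)
          rw [← hfc, G.parity]
          cases G.π u <;> simp
    · have hb1 : u ≠ G.f c v := by
        intro h
        apply hfc
        rw [h, G.invol]
      have hb3 : G.f c u ≠ G.f c v := by
        intro h
        apply huv
        have := congrArg (G.f c) h
        rwa [G.invol, G.invol] at this
      obtain ⟨S, φ, hcut, h1, -, h3, -⟩ := hedge c u v huv hb1 hfc hb3
      exact ⟨S, φ, hcut, h1, h3⟩
  · -- vertex-reflecting → edge-reflecting
    intro hvr c u u' h1 h2 h3 h4
    have e1 : G.f c (G.f c u) = u := G.invol c u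
    have e2 : G.f c (G.f c u') = u' := G.invol c u'
    have hdisj :
        (psiDist G u u' ≤ psiDist G (G.f c u) u' ∧
          psiDist G u u' ≤ psiDist G u (G.f c u')) ∨
        (psiDist G u (G.f c u') ≤ psiDist G (G.f c u) (G.f c u') ∧
          psiDist G u (G.f c u') ≤ psiDist G u u') ∨
        (psiDist G (G.f c u) u' ≤ psiDist G u u' ∧
          psiDist G (G.f c u) u' ≤ psiDist G (G.f c u) (G.f c u')) ∨
        (psiDist G (G.f c u) (G.f c u') ≤ psiDist G u (G.f c u') ∧
          psiDist G (G.f c u) (G.f c u') ≤ psiDist G (G.f c u) u') := by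
      omega
    rcases hdisj with ⟨ha, hb⟩ | ⟨ha, hb⟩ | ⟨ha, hb⟩ | ⟨ha, hb⟩
    · exact psi_helper G hvr c u u' h1 ha hb
    · obtain ⟨S, φ, hcut, p1, p2, p3, p4⟩ :=
        psi_helper G hvr c u (G.f c u') h2 ha (by rw [e2]; exact hb)
      rw [e2] at p4
      exact ⟨S, φ, hcut, p1, p2, p4, p3⟩
    · obtain ⟨S, φ, hcut, p1, p2, p3, p4⟩ :=
        psi_helper G hvr c (G.f c u) u' h3 (by rw [e1]; exact ha) hb
      rw [e1] at p2
      exact ⟨S, φ, hcut, p2, p1, p3, p4⟩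
    · obtain ⟨S, φ, hcut, p1, p2, p3, p4⟩ :=
        psi_helper G hvr c (G.f c u) (G.f c u') h4 (by rw [e1]; exact ha)
          (by rw [e2]; exact hb)
      rw [e1] at p2
      rw [e2] at p4
      exact ⟨S, φ, hcut, p2, p1, p4, p3⟩
end

section
/- Transitivity on A-edges of the group generated by reflecting cuts (Lemma edge-transitive). Let (V, C, f, π) be a connected ψ-graph and fix a color A ∈ C. Assume the graph is A-edge-reflecting: for every pair of disjoint A-edges {u, f A u} and {u', f A u'} there exists a reflecting cut (S, φ) with u, f A u ∈ S and u', f A u' ∉ S. Let H ≤ Equiv.Perm V be the subgroup generated by the set of all permutations φ occurring in reflecting cuts (S, φ) of the graph. Then H acts transitively on A-edges: for all vertices u, v there exists φ ∈ H with {φ u, φ (f A u)} = {v, f A v} (as unordered pairs, i.e. either φ u = v and φ (f A u) = f A v, or φ u = f A v and φ (f A u) = v). -/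
/-- Chains of length `n` in a ψ-graph. -/
def ChainN {V C : Type*} (G : PsiGraph V C) : ℕ → V → V → Prop
  | 0, u, v => u = v
  | n + 1, u, v => ∃ c, ChainN G n (G.f c u) v

lemma chainN_of_rtg {V C : Type*} (G : PsiGraph V C) {u v : V}
    (h : Relation.ReflTransGen (fun x y => ∃ c, y = G.f c x) u v) :
    ∃ n, ChainN G n u v := by
  induction h using Relation.ReflTransGen.head_induction_on with
  | refl => exact ⟨0, rfl⟩
  | head hstep _ ih =>
    obtain ⟨c, hc⟩ := hstep
    obtain ⟨n, hn⟩ := ih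
    exact ⟨n + 1, c, hc ▸ hn⟩

lemma chainN_map {V C : Type*} (G : PsiGraph V C) (φ : Equiv.Perm V)
    (hcomm : ∀ c v, φ (G.f c v) = G.f c (φ v)) :
    ∀ n (a b : V), ChainN G n a b → ChainN G n (φ a) (φ b) := by
  intro n
  induction n with
  | zero => intro a b h; exact congrArg φ h
  | succ n ih =>
    rintro a b ⟨c, h⟩
    exact ⟨c, by rw [← hcomm]; exact ih _ _ h⟩

lemma chainN_cross {V C : Type*} (G : PsiGraph V C) (φ : Equiv.Perm V)
    (S : Set V)
    (hinv : ∀ v, φ (φ v) = v)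
    (hcomm : ∀ c v, φ (G.f c v) = G.f c (φ v))
    (hcut : ∀ c v, v ∈ S → G.f c v ∉ S → G.f c v = φ v) :
    ∀ n (u v : V), ChainN G n u v → u ∈ S → v ∉ S →
      ∃ m < n, ChainN G m u (φ v) := by
  intro n
  induction n with
  | zero => intro u v h hu hv; exact absurd (h ▸ hu) hv
  | succ n ih =>
    rintro u v ⟨c, h⟩ hu hv
    by_cases hcu : G.f c u ∈ S
    · obtain ⟨m, hm, hchain⟩ := ih _ _ h hcu hv
      exact ⟨m + 1, Nat.succ_lt_succ hm, c, hchain⟩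
    · have hφ : G.f c u = φ u := hcut c u hu hcu
      have := chainN_map G φ hcomm n _ _ h
      rw [hφ, hinv] at this
      exact ⟨n, Nat.lt_succ_self n, this⟩

/-- **Transitivity on `A`-edges of the group generated by reflecting cuts**
(Lemma edge-transitive): if the connected ψ-graph is `A`-edge-reflecting, then
the subgroup of permutations generated by the reflecting cuts maps any `A`-edge
to any other `A`-edge (as unordered pairs). -/
theorem reflecting_cuts_transitive_on_edges {V C : Type*} [Fintype V]
    (G : PsiGraph V C) (A : C)
    (hrefl : ∀ u u' : V,
      u ≠ u' → u ≠ G.f A u' → G.f A u ≠ u' → G.f A u ≠ G.f A u' →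
      ∃ (S : Set V) (φ : Equiv.Perm V), IsReflectingCut G S φ ∧
        u ∈ S ∧ G.f A u ∈ S ∧ u' ∉ S ∧ G.f A u' ∉ S) :
    ∀ u v : V,
      ∃ φ ∈ Subgroup.closure
          {φ : Equiv.Perm V | ∃ S : Set V, IsReflectingCut G S φ},
        (φ u = v ∧ φ (G.f A u) = G.f A v) ∨
        (φ u = G.f A v ∧ φ (G.f A u) = v) := by
  have key : ∀ n (u v : V), ChainN G n u v →
      ∃ φ ∈ Subgroup.closure
          {φ : Equiv.Perm V | ∃ S : Set V, IsReflectingCut G S φ},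
        (φ u = v ∧ φ (G.f A u) = G.f A v) ∨
        (φ u = G.f A v ∧ φ (G.f A u) = v) := by
    intro n
    induction n using Nat.strong_induction_on with
    | _ n ih =>
      intro u v hchain
      by_cases h1 : u = v
      · exact ⟨1, one_mem _, Or.inl ⟨h1, by rw [h1]; rfl⟩⟩
      by_cases h2 : u = G.f A v
      · refine ⟨1, one_mem _, Or.inr ⟨h2, ?_⟩⟩
        simp only [Equiv.Perm.coe_one, id_eq]
        rw [h2, G.invol]
      have h3 : G.f A u ≠ v := fun h => h2 (by rw [← h, G.invol])
      have h4 : G.f A u ≠ G.f A v := fun h => h1 (by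
        have := congrArg (G.f A) h
        rwa [G.invol, G.invol] at this)
      obtain ⟨S, φ₀, hc, hu, hfu, hv, hfv⟩ := hrefl u v h1 h2 h3 h4
      obtain ⟨hinv, hcomm, hpar, hside, hcutedge⟩ := hc
      obtain ⟨m, hm, hchain'⟩ :=
        chainN_cross G φ₀ S hinv hcomm hcutedge n u v hchain hu hv
      obtain ⟨ψ, hψmem, hψ⟩ := ih m hm u (φ₀ v) hchain'
      refine ⟨φ₀ * ψ, mul_mem
        (Subgroup.subset_closure ⟨S, hinv, hcomm, hpar, hside, hcutedge⟩)
        hψmem, ?_⟩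
      rcases hψ with ⟨e1, e2⟩ | ⟨e1, e2⟩
      · refine Or.inl ⟨?_, ?_⟩
        · show φ₀ (ψ u) = v
          rw [e1, hinv]
        · show φ₀ (ψ (G.f A u)) = G.f A v
          rw [e2, hcomm, hinv]
      · refine Or.inr ⟨?_, ?_⟩
        · show φ₀ (ψ u) = G.f A v
          rw [e1, hcomm, hinv]
        · show φ₀ (ψ (G.f A u)) = v
          rw [e2, hinv]
  intro u v
  obtain ⟨n, hn⟩ := chainN_of_rtg G (G.conn u v)
  exact key n u v hn
end

section
/- The Cayley graph of a Coxeter group is edge-reflecting (Theorem coxeter), vertex form. Let B be a type, M a Coxeter matrix on B, W a group, and cs : CoxeterSystem M W with simple reflections sᵢ = cs.simple i and length function ℓ = cs.length. For a reflection t of cs (cs.IsReflection t, i.e. t = w * sᵢ * w⁻¹ for some w and i) define S_t := {w : W | ℓ w < ℓ (t * w)}. Then: (i) for every w : W, ℓ (t * w) ≠ ℓ w; hence left multiplication by t is an involution of W interchanging S_t and its complement, and it commutes with the right multiplications w ↦ w * sᵢ defining the edges of the Cayley graph; (ii) for every w ∈ S_t and every i : B with w * sᵢ ∉ S_t, one has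 w * sᵢ = t * w; (iii) for any two distinct u, v : W there exists a reflection t of cs such that exactly one of u, v lies in S_t. -/
/-!
Following Björner–Brenti, the simple reflection `sᵢ` acts on `W × ZMod 2` by
`(t, e) ↦ (sᵢ t sᵢ, e + [t = sᵢ])`. These involutions satisfy the Coxeter relations, so they
extend to an action of `W` of the form `(t, e) ↦ (w t w⁻¹, e + n(w, t))`, where the cocycle
`n(u v, t) = n(v, t) + n(u, v t v⁻¹)` counts, mod 2, the occurrences of `t` in the right
inversion sequence of any word for `w`. On a reduced word this shows that `n(w, t) = 1` forces
`ℓ(w t) < ℓ(w)`; since `n(w t, t) = n(w, t) + 1` for a reflection `t`, the converse follows, so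
`n(w⁻¹, ·)` is the indicator of the left inversions of `w`. The cocycle identity then gives (ii):
crossing the wall of `t` along an `i`-edge from `w` forces `w⁻¹ t w = sᵢ`; and (iii): if `sᵢ` is
a right descent of `v⁻¹ u`, the reflection `u sᵢ u⁻¹` separates `u` from `v`.
-/

open Finset

section TwistedConj

variable {G : Type*} [Group G]

theorem conj_eq_iff (g t x : G) : g * t * g⁻¹ = x ↔ t = g⁻¹ * x * g := by
  constructor <;> rintro rfl <;> group

def twistedConj (g : G) (f : G → ZMod 2) (x : G × ZMod 2) : G × ZMod 2 :=
  (g * x.1 * g⁻¹, x.2 + f x.1)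

@[simp]
theorem twistedConj_apply (g : G) (f : G → ZMod 2) (t : G) (e : ZMod 2) :
    twistedConj g f (t, e) = (g * t * g⁻¹, e + f t) := rfl

theorem twistedConj_comp (g h : G) (f f' : G → ZMod 2) :
    twistedConj g f ∘ twistedConj h f' =
      twistedConj (g * h) fun t ↦ f' t + f (h * t * h⁻¹) := by
  funext ⟨t, e⟩
  simp only [Function.comp_apply, twistedConj_apply, mul_inv_rev, Prod.mk.injEq]
  exact ⟨by group, by ring⟩

theorem twistedConj_one_zero : twistedConj (1 : G) (fun _ ↦ 0) = id := by
  funext ⟨t, e⟩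
  simp

theorem twistedConj_iterate (g : G) (f : G → ZMod 2) (n : ℕ) :
    (twistedConj g f)^[n] =
      twistedConj (g ^ n) fun t ↦ ∑ k ∈ range n, f (g ^ k * t * (g ^ k)⁻¹) := by
  induction n with
  | zero => simp [twistedConj_one_zero]
  | succ n ih =>
    rw [Function.iterate_succ', ih, twistedConj_comp, ← pow_succ']
    simp [sum_range_succ]

end TwistedConj

theorem sum_range_two_mul_eq_zero_of_periodic {R : Type*} [Ring R] [CharP R 2] {f : ℕ → R}
    {m : ℕ} (hf : Function.Periodic f m) : ∑ l ∈ range (2 * m), f l = 0 := by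
  have hf' (l : ℕ) : f (m + l) = f l := by rw [add_comm, hf]
  rw [two_mul, sum_range_add]
  simp only [hf', CharTwo.add_self_eq_zero]

theorem ZMod.ne_one_iff_eq_zero_mod_two (a : ZMod 2) : a ≠ 1 ↔ a = 0 := by
  revert a; decide

theorem ZMod.xor_eq_zero_of_ne_mod_two {a b : ZMod 2} (h : a ≠ b) : Xor' (a = 0) (b = 0) := by
  revert a b; unfold Xor'; decide

namespace CoxeterSystem

open scoped Classical

variable {B W : Type*} [Group W] {M : CoxeterMatrix B} (cs : CoxeterSystem M W)

theorem simple_mul_pow_eq_inv_mul_simple (i j : B) (n : ℕ) :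
    cs.simple j * (cs.simple i * cs.simple j) ^ n =
      ((cs.simple i * cs.simple j) ^ n)⁻¹ * cs.simple j := by
  have h : cs.simple j * (cs.simple i * cs.simple j) * (cs.simple j)⁻¹ =
      (cs.simple i * cs.simple j)⁻¹ := by
    simp [mul_assoc]
  calc cs.simple j * (cs.simple i * cs.simple j) ^ n
      = (cs.simple j * (cs.simple i * cs.simple j) * (cs.simple j)⁻¹) ^ n * cs.simple j := by
        rw [conj_pow]; group
    _ = ((cs.simple i * cs.simple j) ^ n)⁻¹ * cs.simple j := by rw [h, inv_pow]

theorem conj_pow_eq_simple_iff (i j : B) (k : ℕ) (t : W) :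
    (cs.simple i * cs.simple j) ^ k * t * ((cs.simple i * cs.simple j) ^ k)⁻¹ = cs.simple j ↔
      t = ((cs.simple i * cs.simple j) ^ (2 * k))⁻¹ * cs.simple j := by
  rw [conj_eq_iff, mul_assoc, simple_mul_pow_eq_inv_mul_simple, ← mul_assoc, ← mul_inv_rev,
    ← pow_add, two_mul]

theorem simple_conj_conj_pow_eq_simple_iff (i j : B) (k : ℕ) (t : W) :
    cs.simple j * ((cs.simple i * cs.simple j) ^ k * t * ((cs.simple i * cs.simple j) ^ k)⁻¹) *
        (cs.simple j)⁻¹ = cs.simple i ↔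
      t = ((cs.simple i * cs.simple j) ^ (2 * k + 1))⁻¹ * cs.simple j := by
  rw [conj_eq_iff, conj_eq_iff, inv_simple, show cs.simple j * cs.simple i * cs.simple j =
    (cs.simple i * cs.simple j)⁻¹ * cs.simple j by simp [mul_assoc], mul_assoc, mul_assoc,
    simple_mul_pow_eq_inv_mul_simple]
  generalize cs.simple i * cs.simple j = c
  group

noncomputable def parityPerm (i : B) : Equiv.Perm (W × ZMod 2) :=
  Function.Involutive.toPerm (twistedConj (cs.simple i) fun t ↦ if t = cs.simple i then 1 else 0)
    fun x ↦ by
      have hf : (fun t ↦ (if t = cs.simple i then 1 else 0) +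
          if cs.simple i * t * (cs.simple i)⁻¹ = cs.simple i then 1 else 0) =
          fun _ ↦ (0 : ZMod 2) := by
        funext t
        rw [mul_inv_eq_iff_eq_mul, mul_right_inj, CharTwo.add_self_eq_zero]
      rw [← Function.comp_apply (f := twistedConj _ _), twistedConj_comp, simple_mul_simple_self,
        hf, twistedConj_one_zero, id]

theorem coe_parityPerm (i : B) :
    ⇑(cs.parityPerm i) = twistedConj (cs.simple i) fun t ↦ if t = cs.simple i then 1 else 0 :=
  rfl

/- With `c = s i * s j`, the `n`-th power of `parityPerm i * parityPerm j` crosses the reflections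
`(c ^ l)⁻¹ * s j`, `l < 2 * n`, of the dihedral subgroup. -/
theorem sum_parity_conj_pow_eq_sum_range_two_mul (i j : B) (n : ℕ) (t : W) :
    ∑ k ∈ range n,
      ((if (cs.simple i * cs.simple j) ^ k * t * ((cs.simple i * cs.simple j) ^ k)⁻¹ =
          cs.simple j then 1 else 0) +
        if cs.simple j * ((cs.simple i * cs.simple j) ^ k * t *
          ((cs.simple i * cs.simple j) ^ k)⁻¹) * (cs.simple j)⁻¹ = cs.simple i then 1 else 0) =
      ∑ l ∈ range (2 * n),
        if t = ((cs.simple i * cs.simple j) ^ l)⁻¹ * cs.simple j then (1 : ZMod 2) else 0 := by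
  induction n with
  | zero => simp
  | succ n ih =>
    rw [sum_range_succ, ih, conj_pow_eq_simple_iff, simple_conj_conj_pow_eq_simple_iff,
      show 2 * (n + 1) = 2 * n + 1 + 1 by ring, sum_range_succ, sum_range_succ, add_assoc]

theorem isLiftable_parityPerm : M.IsLiftable cs.parityPerm := by
  intro i j
  apply DFunLike.coe_injective
  rw [Equiv.Perm.coe_pow, Equiv.Perm.coe_mul, coe_parityPerm, coe_parityPerm, twistedConj_comp,
    twistedConj_iterate, simple_mul_simple_pow]
  have hper (t : W) : Function.Periodic
      (fun l ↦ if t = ((cs.simple i * cs.simple j) ^ l)⁻¹ * cs.simple j then (1 : ZMod 2) else 0)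
      (M i j) := fun l ↦ by simp only [pow_add, simple_mul_simple_pow, mul_one]
  simp only [sum_parity_conj_pow_eq_sum_range_two_mul,
    sum_range_two_mul_eq_zero_of_periodic (hper _), twistedConj_one_zero, Equiv.Perm.coe_one]

noncomputable def parityRep : W →* Equiv.Perm (W × ZMod 2) :=
  cs.lift ⟨cs.parityPerm, cs.isLiftable_parityPerm⟩

theorem parityRep_simple (i : B) : cs.parityRep (cs.simple i) = cs.parityPerm i :=
  cs.lift_apply_simple cs.isLiftable_parityPerm i

theorem exists_coe_parityRep_eq_twistedConj (w : W) :
    ∃ f, ⇑(cs.parityRep w) = twistedConj w f := by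
  induction w using cs.simple_induction_left with
  | one => exact ⟨fun _ ↦ 0, by rw [map_one, Equiv.Perm.coe_one, twistedConj_one_zero]⟩
  | mul_simple_left w i ih =>
    obtain ⟨f, hf⟩ := ih
    exact ⟨_, by rw [map_mul, Equiv.Perm.coe_mul, hf, parityRep_simple, coe_parityPerm,
      twistedConj_comp]⟩

noncomputable def invParity (w t : W) : ZMod 2 := (cs.parityRep w (t, 0)).2

theorem coe_parityRep (w : W) : ⇑(cs.parityRep w) = twistedConj w (cs.invParity w) := by
  obtain ⟨f, hf⟩ := cs.exists_coe_parityRep_eq_twistedConj w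
  have : cs.invParity w = f := funext fun t ↦ by simp [invParity, hf]
  rw [hf, this]

theorem invParity_mul (u v t : W) :
    cs.invParity (u * v) t = cs.invParity v t + cs.invParity u (v * t * v⁻¹) := by
  rw [invParity, map_mul, Equiv.Perm.mul_apply, coe_parityRep, coe_parityRep]
  simp only [twistedConj_apply, zero_add]

theorem invParity_one (t : W) : cs.invParity 1 t = 0 := by
  simp [invParity]

theorem invParity_simple (i : B) (t : W) :
    cs.invParity (cs.simple i) t = if t = cs.simple i then 1 else 0 := by
  simp [invParity, parityRep_simple, coe_parityPerm]

theorem invParity_wordProd (ω : List B) (t : W) :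
    cs.invParity (cs.wordProd ω) t = ((cs.rightInvSeq ω).count t : ZMod 2) := by
  induction ω with
  | nil => simp [invParity_one]
  | cons i ω ih =>
    rw [wordProd_cons, invParity_mul, ih, invParity_simple, rightInvSeq, List.count_cons,
      conj_eq_iff]
    simp only [Nat.cast_add, Nat.cast_ite, Nat.cast_one, Nat.cast_zero, beq_iff_eq,
      eq_comm (a := t)]

theorem length_mul_lt_of_invParity_eq_one {w t : W} (h : cs.invParity w t = 1) :
    cs.length (w * t) < cs.length w := by
  obtain ⟨ω, hω, rfl⟩ := cs.exists_isReduced w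
  have hmem : t ∈ cs.rightInvSeq ω := by
    by_contra hn
    rw [invParity_wordProd, List.count_eq_zero_of_not_mem hn, Nat.cast_zero] at h
    exact zero_ne_one h
  exact (cs.isRightInversion_of_mem_rightInvSeq hω hmem).2

variable {cs}

theorem IsReflection.invParity_self {t : W} (ht : cs.IsReflection t) : cs.invParity t t = 1 := by
  obtain ⟨u, i, rfl⟩ := ht
  have h₁ := cs.invParity_mul (u * cs.simple i) u⁻¹ (u * cs.simple i * u⁻¹)
  have h₂ := cs.invParity_mul u (cs.simple i) (cs.simple i)
  have h₃ := cs.invParity_mul u u⁻¹ (u * cs.simple i * u⁻¹)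
  have hconj : u⁻¹ * (u * cs.simple i * u⁻¹) * u⁻¹⁻¹ = cs.simple i := by group
  simp only [hconj, mul_inv_cancel_right, mul_inv_cancel, invParity_one, invParity_simple,
    if_true] at h₁ h₂ h₃
  linear_combination h₁ + h₂ - h₃

theorem IsReflection.invParity_mul_self {t : W} (ht : cs.IsReflection t) (w : W) :
    cs.invParity (w * t) t = cs.invParity w t + 1 := by
  rw [invParity_mul, ht.invParity_self, mul_inv_cancel_right, add_comm]

theorem IsReflection.length_mul_lt_iff {t : W} (ht : cs.IsReflection t) (w : W) :
    cs.length (w * t) < cs.length w ↔ cs.invParity w t = 1 := by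
  refine ⟨fun hlt ↦ ?_, cs.length_mul_lt_of_invParity_eq_one⟩
  by_contra hne
  have hwt : cs.invParity (w * t) t = 1 := by
    rw [ht.invParity_mul_self, (ZMod.ne_one_iff_eq_zero_mod_two _).mp hne, zero_add]
  have hgt := cs.length_mul_lt_of_invParity_eq_one hwt
  rw [mul_assoc, ht.mul_self, mul_one] at hgt
  exact lt_asymm hlt hgt

theorem IsReflection.length_lt_length_mul_iff {t : W} (ht : cs.IsReflection t) (w : W) :
    cs.length w < cs.length (t * w) ↔ cs.invParity w⁻¹ t = 0 := by
  have hlen : cs.length (t * w) = cs.length (w⁻¹ * t) := by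
    rw [← length_inv, mul_inv_rev, ht.inv]
  have hne := ht.length_mul_left_ne w⁻¹
  rw [hlen, ← cs.length_inv w, ← ZMod.ne_one_iff_eq_zero_mod_two, ne_eq,
    ← ht.length_mul_lt_iff]
  omega

theorem IsReflection.mul_simple_eq_mul {t w : W} {i : B} (ht : cs.IsReflection t)
    (h₁ : cs.length w < cs.length (t * w))
    (h₂ : ¬ cs.length (w * cs.simple i) < cs.length (t * (w * cs.simple i))) :
    w * cs.simple i = t * w := by
  rw [ht.length_lt_length_mul_iff] at h₁ h₂
  rw [mul_inv_rev, inv_simple, invParity_mul, h₁, invParity_simple, zero_add, inv_inv] at h₂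
  have hconj : w⁻¹ * t * w = cs.simple i := (ite_ne_right_iff.mp h₂).1
  rw [← hconj]
  group

variable (cs)

theorem exists_isReflection_invParity_inv_ne {u v : W} (huv : u ≠ v) :
    ∃ t, cs.IsReflection t ∧ cs.invParity u⁻¹ t ≠ cs.invParity v⁻¹ t := by
  obtain ⟨i, hi⟩ := cs.exists_rightDescent_of_ne_one (w := v⁻¹ * u)
    (by rwa [ne_eq, inv_mul_eq_one, eq_comm])
  have hpar : cs.invParity (v⁻¹ * u) (cs.simple i) = 1 :=
    ((cs.isReflection_simple i).length_mul_lt_iff _).mp hi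
  have hv := cs.invParity_mul (v⁻¹ * u) u⁻¹ (u * cs.simple i * u⁻¹)
  have hconj : u⁻¹ * (u * cs.simple i * u⁻¹) * u⁻¹⁻¹ = cs.simple i := by group
  rw [mul_inv_cancel_right, hconj, hpar] at hv
  exact ⟨u * cs.simple i * u⁻¹, (cs.isReflection_simple i).conj u, by rw [hv]; simp⟩

end CoxeterSystem

/-- **The Cayley graph of a Coxeter group is edge-reflecting (vertex form)**
(Theorem coxeter). For a reflection `t` of a Coxeter system `cs`, let
`S_t = {w | ℓ w < ℓ (t * w)}`. Then:
(i) `ℓ (t * w) ≠ ℓ w` for all `w` (so left multiplication by `t` is an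
involution interchanging `S_t` and its complement, commuting with the right
multiplications defining the Cayley graph edges);
(ii) if `w ∈ S_t` and `w * sᵢ ∉ S_t` then `w * sᵢ = t * w`;
(iii) any two distinct group elements are separated by some `S_t`. -/
theorem coxeter_cayley_edge_reflecting {B W : Type*} [Group W]
    (M : CoxeterMatrix B) (cs : CoxeterSystem M W) :
    (∀ t : W, cs.IsReflection t → ∀ w : W, cs.length (t * w) ≠ cs.length w) ∧
    (∀ t : W, cs.IsReflection t → ∀ (w : W) (i : B),
      cs.length w < cs.length (t * w) →
      ¬ (cs.length (w * cs.simple i) < cs.length (t * (w * cs.simple i))) →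
      w * cs.simple i = t * w) ∧
    (∀ u v : W, u ≠ v → ∃ t : W, cs.IsReflection t ∧
      Xor' (cs.length u < cs.length (t * u))
           (cs.length v < cs.length (t * v))) := by
  refine ⟨fun t ht w ↦ ht.length_mul_right_ne w,
    fun t ht w i h₁ h₂ ↦ ht.mul_simple_eq_mul h₁ h₂, fun u v huv ↦ ?_⟩
  obtain ⟨t, ht, hne⟩ := cs.exists_isReflection_invParity_inv_ne huv
  refine ⟨t, ht, ?_⟩
  rw [ht.length_lt_length_mul_iff, ht.length_lt_length_mul_iff]
  exact ZMod.xor_eq_zero_of_ne_mod_two hne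
end
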